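/- arXiv:1008.4625 — 9 statements merged into one kernel-verified Lean document; each statement's English description precedes it below -/
import Mathlib

section
/- For every subset A ⊆ X, the segregating-site probability satisfies s_A = ∑_{B ⊆ A} (−1)^{|B|} s_B, where the sum is over all subsets B of A. -/
open Finset

lemma seg_alt_sum_real {α : Type*} [DecidableEq α] (x : Finset α) :
    (∑ m ∈ x.powerset, (-1 : ℝ) ^ m.card) = if x = ∅ then 1 else 0 := by
  have h := @Finset.sum_powerset_neg_one_pow_card α _ x
  have h2 : ((∑ m ∈ x.powerset, (-1 : ℤ) ^ m.card : ℤ) : ℝ)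
      = ((if x = ∅ then 1 else 0 : ℤ) : ℝ) := by rw [h]
  push_cast at h2
  simpa using h2

lemma seg_inner_sum {α : Type*} [DecidableEq α] (A C : Finset α) :
    ∑ B ∈ A.powerset,
      (-1:ℝ)^B.card * (if (B ∩ C).Nonempty ∧ (B \ C).Nonempty then 1 else 0)
    = (if (A ∩ C).Nonempty ∧ (A \ C).Nonempty then 1 else 0) := by
  have hcond : ∀ B : Finset α,
      (if (B ∩ C).Nonempty ∧ (B \ C).Nonempty then (1:ℝ) else 0)
      = 1 - (if B ⊆ C then 1 else 0) - (if B ∩ C = ∅ then 1 else 0)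
        + (if B = ∅ then 1 else 0) := by
    intro B
    by_cases h1 : B ∩ C = ∅ <;> by_cases h2 : B ⊆ C
    · have hB : B = ∅ := by
        have := inter_eq_left.mpr h2
        rw [h1] at this; exact this.symm
      simp [h1, h2, hB]
    · have hB : B ≠ ∅ := fun h => h2 (by simp [h])
      simp [h1, h2, hB, Finset.nonempty_iff_ne_empty]
    · have hB : B ≠ ∅ := by
        intro h; rw [h] at h1; simp at h1
      simp [h1, h2, hB, Finset.sdiff_eq_empty_iff_subset,
        Finset.nonempty_iff_ne_empty]
    · have hB : B ≠ ∅ := fun h => h2 (by simp [h])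
      simp [h1, h2, hB, Finset.sdiff_eq_empty_iff_subset,
        Finset.nonempty_iff_ne_empty]
  simp only [hcond, mul_sub, mul_add, mul_one, Finset.sum_sub_distrib,
    Finset.sum_add_distrib]
  have t1 : (∑ B ∈ A.powerset, (-1:ℝ)^B.card) = if A = ∅ then 1 else 0 :=
    seg_alt_sum_real A
  have t2 : (∑ B ∈ A.powerset, (-1:ℝ)^B.card * (if B ⊆ C then 1 else 0))
      = if A ∩ C = ∅ then 1 else 0 := by
    simp only [mul_ite, mul_one, mul_zero]
    rw [← Finset.sum_filter]
    have : A.powerset.filter (fun B => B ⊆ C) = (A ∩ C).powerset := by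
      ext B
      simp only [Finset.mem_filter, Finset.mem_powerset, Finset.subset_inter_iff]
    rw [this, seg_alt_sum_real]
  have t3 : (∑ B ∈ A.powerset, (-1:ℝ)^B.card * (if B ∩ C = ∅ then 1 else 0))
      = if A \ C = ∅ then 1 else 0 := by
    simp only [mul_ite, mul_one, mul_zero]
    rw [← Finset.sum_filter]
    have : A.powerset.filter (fun B => B ∩ C = ∅) = (A \ C).powerset := by
      ext B
      simp [Finset.mem_powerset, Finset.subset_sdiff,
        ← Finset.disjoint_iff_inter_eq_empty]
    rw [this, seg_alt_sum_real]
  have t4 : (∑ B ∈ A.powerset, (-1:ℝ)^B.card * (if B = ∅ then 1 else 0))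
      = 1 := by
    simp only [mul_ite, mul_one, mul_zero]
    rw [← Finset.sum_filter]
    have : A.powerset.filter (fun B => B = ∅) = {∅} := by
      ext B; simp; intro h; simp [h]
    rw [this]; simp
  rw [t1, t2, t3, t4]
  by_cases h1 : A ∩ C = ∅ <;> by_cases h2 : A \ C = ∅
  · have hA : A = ∅ := by
      have := Finset.sdiff_eq_empty_iff_subset.mp h2
      have h3 := inter_eq_left.mpr this
      rw [h1] at h3; exact h3.symm
    simp [h1, h2, hA]
  · have hA : A ≠ ∅ := by intro h; rw [h] at h2; simp at h2
    have hsub : ¬ A ⊆ C := fun h => h2 (Finset.sdiff_eq_empty_iff_subset.mpr h)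
    simp [h1, h2, hA, hsub, Finset.nonempty_iff_ne_empty]
  · have hA : A ≠ ∅ := by intro h; rw [h] at h1; simp at h1
    have hsub : A ⊆ C := Finset.sdiff_eq_empty_iff_subset.mp h2
    simp [h1, h2, hA, hsub, Finset.nonempty_iff_ne_empty]
  · have hA : A ≠ ∅ := by intro h; rw [h] at h1; simp at h1
    have hsub : ¬ A ⊆ C := fun h => h2 (Finset.sdiff_eq_empty_iff_subset.mpr h)
    simp [h1, h2, hA, hsub, Finset.nonempty_iff_ne_empty]

/-- Let `X` be a finite set (here the type `α` with `X = univ`).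
A site-pattern distribution assigns to each subset `A` a nonnegative real `p A`
with total sum 1.  The segregating-site probability is
`s A = ∑_{B : A ∩ B ≠ ∅, A ∖ B ≠ ∅} p B`.  Then for every subset `A`,
`s A = ∑_{B ⊆ A} (−1)^{|B|} s B`. -/
theorem segregating_alternating_sum
    {α : Type*} [Fintype α] [DecidableEq α]
    (p : Finset α → ℝ) (hp : ∀ A : Finset α, 0 ≤ p A)
    (hsum : ∑ A : Finset α, p A = 1)
    (s : Finset α → ℝ)
    (hs : ∀ A : Finset α, s A =
      ∑ B ∈ univ.filter (fun B : Finset α => (A ∩ B).Nonempty ∧ (A \ B).Nonempty), p B)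
    (A : Finset α) :
    s A = ∑ B ∈ A.powerset, (-1 : ℝ) ^ B.card * s B := by
  simp only [hs, Finset.sum_filter, Finset.mul_sum]
  rw [Finset.sum_comm]
  apply Finset.sum_congr rfl
  intro C _
  have := seg_inner_sum A C
  calc (if (A ∩ C).Nonempty ∧ (A \ C).Nonempty then p C else 0)
      = (if (A ∩ C).Nonempty ∧ (A \ C).Nonempty then (1:ℝ) else 0) * p C := by
        split <;> simp
    _ = (∑ B ∈ A.powerset,
          (-1:ℝ)^B.card * (if (B ∩ C).Nonempty ∧ (B \ C).Nonempty then 1 else 0)) * p C := by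
        rw [this]
    _ = ∑ B ∈ A.powerset,
          (-1:ℝ)^B.card * (if (B ∩ C).Nonempty ∧ (B \ C).Nonempty then p C else 0) := by
        rw [Finset.sum_mul]
        apply Finset.sum_congr rfl
        intro B _
        split <;> simp <;> ring
end

section
/- For every subset B with ∅ ⊊ B ⊊ X, the symmetrized site-pattern probability is recovered from the segregating-site probabilities by p̃_B = (1/2) ∑_{A : B ⊆ A ⊆ X} (−1)^{|A|−|B|+1} s_A. -/
open Finset

lemma alt_sum_interval {α : Type*} [Fintype α] [DecidableEq α]
    (B C : Finset α) (hBC : B ⊆ C) :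
    ∑ A ∈ univ.filter (fun A : Finset α => B ⊆ A ∧ A ⊆ C),
      (-1 : ℝ) ^ (A.card - B.card) = if C = B then 1 else 0 := by
  have key : ∑ A ∈ univ.filter (fun A : Finset α => B ⊆ A ∧ A ⊆ C),
      (-1 : ℝ) ^ (A.card - B.card)
      = ∑ S ∈ (C \ B).powerset, (-1 : ℝ) ^ S.card := by
    refine Finset.sum_nbij' (fun A => A \ B) (fun S => B ∪ S) ?_ ?_ ?_ ?_ ?_
    · intro A hA
      simp only [mem_filter, mem_univ, true_and] at hA
      exact mem_powerset.2 (sdiff_subset_sdiff hA.2 (Subset.refl B))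
    · intro S hS
      simp only [mem_powerset] at hS
      simp only [mem_filter, mem_univ, true_and]
      exact ⟨subset_union_left, union_subset hBC (hS.trans sdiff_subset)⟩
    · intro A hA
      simp only [mem_filter, mem_univ, true_and] at hA
      exact union_sdiff_of_subset hA.1
    · intro S hS
      simp only [mem_powerset] at hS
      have : Disjoint B S := (sdiff_disjoint.mono_left hS).symm
      exact union_sdiff_cancel_left this
    · intro A hA
      simp only [mem_filter, mem_univ, true_and] at hA
      congr 1
      rw [card_sdiff_of_subset hA.1]
  rw [key]
  have := @Finset.sum_powerset_neg_one_pow_card _ _ (C \ B)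
  have h2 : ((∑ m ∈ (C \ B).powerset, (-1 : ℤ) ^ m.card : ℤ) : ℝ)
      = ∑ m ∈ (C \ B).powerset, (-1 : ℝ) ^ m.card := by push_cast; ring_nf
  rw [← h2, this]
  have : C \ B = ∅ ↔ C = B := by
    rw [sdiff_eq_empty_iff_subset]
    exact ⟨fun h => le_antisymm h hBC, fun h => h.le⟩
  split_ifs with h1 h2 h2 <;> simp_all

lemma seg_eq {α : Type*} [Fintype α] [DecidableEq α]
    (p : Finset α → ℝ) (hsum : ∑ A : Finset α, p A = 1)
    (A : Finset α) (hA : A.Nonempty) :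
    ∑ C ∈ univ.filter (fun C : Finset α => (A ∩ C).Nonempty ∧ (A \ C).Nonempty), p C
      = 1 - ∑ C ∈ univ.filter (fun C : Finset α => A ⊆ C), (p C + p Cᶜ) := by
  have hsplit := Finset.sum_filter_add_sum_filter_not univ
    (fun C : Finset α => (A ∩ C).Nonempty ∧ (A \ C).Nonempty) p
  rw [hsum] at hsplit
  have hunion : univ.filter (fun C : Finset α => ¬((A ∩ C).Nonempty ∧ (A \ C).Nonempty))
      = univ.filter (fun C : Finset α => A ⊆ C) ∪ univ.filter (fun C : Finset α => A ∩ C = ∅) := by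
    ext C
    simp only [mem_filter, mem_union, mem_univ, true_and, not_and_or,
      not_nonempty_iff_eq_empty]
    constructor
    · rintro (h | h)
      · right; exact h
      · left; rwa [sdiff_eq_empty_iff_subset] at h
    · rintro (h | h)
      · right; rwa [sdiff_eq_empty_iff_subset]
      · left; exact h
  have hdisj : Disjoint (univ.filter (fun C : Finset α => A ⊆ C))
      (univ.filter (fun C : Finset α => A ∩ C = ∅)) := by
    rw [Finset.disjoint_left]
    intro C hC1 hC2
    simp only [mem_filter, mem_univ, true_and] at hC1 hC2
    have : A = ∅ := by rw [← inter_eq_left.2 hC1]; exact hC2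
    exact hA.ne_empty this
  rw [hunion, Finset.sum_union hdisj] at hsplit
  have hcompl : ∑ C ∈ univ.filter (fun C : Finset α => A ∩ C = ∅), p C
      = ∑ C ∈ univ.filter (fun C : Finset α => A ⊆ C), p Cᶜ := by
    refine (Finset.sum_nbij' (fun C => Cᶜ) (fun C => Cᶜ) ?_ ?_ ?_ ?_ ?_).symm
    · intro C hC
      simp only [mem_filter, mem_univ, true_and] at hC ⊢
      rw [← Finset.disjoint_iff_inter_eq_empty]
      exact disjoint_compl_right.mono_left hC
    · intro C hC
      simp only [mem_filter, mem_univ, true_and] at hC ⊢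
      intro a ha
      simp only [Finset.mem_compl]
      intro hc
      exact Finset.eq_empty_iff_forall_notMem.mp hC a (Finset.mem_inter.2 ⟨ha, hc⟩)
    · intro C _; exact compl_compl C
    · intro C _; exact compl_compl C
    · intro C _; rfl
  rw [hcompl] at hsplit
  rw [Finset.sum_add_distrib]
  linarith

/-- For every subset `B` with `∅ ⊊ B ⊊ X`, the symmetrized
site-pattern probability `p̃_B = (p B + p Bᶜ)/2` is recovered from the
segregating-site probabilities by
`p̃_B = (1/2) ∑_{A ⊇ B} (−1)^{|A|−|B|+1} s A`. -/
theorem symmetrized_pattern_from_segregating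
    {α : Type*} [Fintype α] [DecidableEq α]
    (p : Finset α → ℝ) (hp : ∀ A : Finset α, 0 ≤ p A)
    (hsum : ∑ A : Finset α, p A = 1)
    (s : Finset α → ℝ)
    (hs : ∀ A : Finset α, s A =
      ∑ B ∈ univ.filter (fun B : Finset α => (A ∩ B).Nonempty ∧ (A \ B).Nonempty), p B)
    (B : Finset α) (hB : B.Nonempty) (hBX : B ≠ univ) :
    (p B + p Bᶜ) / 2 =
      1 / 2 * ∑ A ∈ univ.filter (fun A : Finset α => B ⊆ A),
        (-1 : ℝ) ^ (A.card - B.card + 1) * s A := by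
  classical
  set q : Finset α → ℝ := fun C => p C + p Cᶜ with hq
  have hstep : ∀ A ∈ univ.filter (fun A : Finset α => B ⊆ A),
      (-1 : ℝ) ^ (A.card - B.card + 1) * s A
      = -((-1 : ℝ) ^ (A.card - B.card))
        + (-1 : ℝ) ^ (A.card - B.card) * ∑ C ∈ univ.filter (fun C : Finset α => A ⊆ C), q C := by
    intro A hA
    simp only [mem_filter, mem_univ, true_and] at hA
    rw [hs, seg_eq p hsum A (hB.mono hA), pow_succ]
    ring
  rw [Finset.sum_congr rfl hstep, Finset.sum_add_distrib, Finset.sum_neg_distrib]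
  have hT1 : ∑ A ∈ univ.filter (fun A : Finset α => B ⊆ A),
      (-1 : ℝ) ^ (A.card - B.card) = 0 := by
    have hfeq : univ.filter (fun A : Finset α => B ⊆ A)
        = univ.filter (fun A : Finset α => B ⊆ A ∧ A ⊆ univ) := by
      apply Finset.filter_congr; intro A _; simp
    rw [hfeq, alt_sum_interval B univ (subset_univ B), if_neg (Ne.symm hBX)]
  have hT2 : ∑ A ∈ univ.filter (fun A : Finset α => B ⊆ A),
      (-1 : ℝ) ^ (A.card - B.card) * ∑ C ∈ univ.filter (fun C : Finset α => A ⊆ C), q C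
      = q B := by
    have e1 : ∀ A ∈ univ.filter (fun A : Finset α => B ⊆ A),
        (-1 : ℝ) ^ (A.card - B.card) * ∑ C ∈ univ.filter (fun C : Finset α => A ⊆ C), q C
        = ∑ C : Finset α, (if A ⊆ C then (-1 : ℝ) ^ (A.card - B.card) * q C else 0) := by
      intro A _
      rw [Finset.mul_sum, Finset.sum_filter]
    have e1b : ∀ a : Finset α,
        (if B ⊆ a then ∑ C : Finset α,
          (if a ⊆ C then (-1 : ℝ) ^ (a.card - B.card) * q C else 0) else 0)
        = ∑ C : Finset α, (if B ⊆ a then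
          (if a ⊆ C then (-1 : ℝ) ^ (a.card - B.card) * q C else 0) else 0) := by
      intro a; split_ifs with h <;> simp
    rw [Finset.sum_congr rfl e1, Finset.sum_filter,
      Finset.sum_congr rfl fun a _ => e1b a, Finset.sum_comm]
    have e2 : ∀ C : Finset α,
        (∑ A : Finset α, if B ⊆ A then
          (if A ⊆ C then (-1 : ℝ) ^ (A.card - B.card) * q C else 0) else 0)
        = (if C = B then 1 else 0) * q C := by
      intro C
      have e3 : (∑ A : Finset α, if B ⊆ A then
          (if A ⊆ C then (-1 : ℝ) ^ (A.card - B.card) * q C else 0) else 0)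
          = ∑ A ∈ univ.filter (fun A : Finset α => B ⊆ A ∧ A ⊆ C),
              (-1 : ℝ) ^ (A.card - B.card) * q C := by
        rw [Finset.sum_filter]
        exact Finset.sum_congr rfl fun A _ => by split_ifs with h1 h2 <;> simp_all
      rw [e3, ← Finset.sum_mul]
      by_cases hBC : B ⊆ C
      · rw [alt_sum_interval B C hBC]
      · have hempty : univ.filter (fun A : Finset α => B ⊆ A ∧ A ⊆ C) = ∅ := by
          apply Finset.filter_false_of_mem
          rintro A _ ⟨h1, h2⟩
          exact hBC (h1.trans h2)
        have hCB : C ≠ B := fun h => hBC (h ▸ Subset.refl B)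
        rw [hempty, if_neg hCB]
        simp
    rw [Finset.sum_congr rfl fun C _ => e2 C]
    simp [ite_mul, Finset.sum_ite_eq']
  rw [hT1, hT2]
  ring
end

section
/- For every subset A ⊆ X, the phylogenetic diversity satisfies δ_A = ∑_{B ⊆ A} (−1)^{|B|} δ_B, where the sum is over all subsets B of A. -/
open Finset

private lemma sum_pow_real {α : Type*} [DecidableEq α] (x : Finset α) :
    ∑ m ∈ x.powerset, (-1 : ℝ) ^ m.card = if x = ∅ then 1 else 0 := by
  have h := @Finset.sum_powerset_neg_one_pow_card α _ x
  have h2 := congrArg (fun z : ℤ => (z : ℝ)) h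
  push_cast [apply_ite (fun z : ℤ => (z : ℝ))] at h2
  simpa using h2

private lemma key {α : Type*} [DecidableEq α] (A C : Finset α) :
    ∑ B ∈ A.powerset, (-1 : ℝ) ^ B.card *
      (if (B ∩ C).Nonempty ∧ (B \ C).Nonempty then 1 else 0)
    = (if (A ∩ C).Nonempty ∧ (A \ C).Nonempty then 1 else 0) := by
  have hind : ∀ B : Finset α,
      (if (B ∩ C).Nonempty ∧ (B \ C).Nonempty then (1 : ℝ) else 0)
      = 1 - (if B ∩ C = ∅ then 1 else 0) - (if B \ C = ∅ then 1 else 0)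
        + (if B = ∅ then 1 else 0) := by
    intro B
    have hB : B = ∅ ↔ B ∩ C = ∅ ∧ B \ C = ∅ := by
      constructor
      · rintro rfl; simp
      · rintro ⟨h1, h2⟩
        have : B ∩ C ∪ B \ C = B := by ext x; by_cases hx : x ∈ C <;> simp [hx]
        rw [h1, h2] at this; simpa using this.symm
    by_cases h1 : B ∩ C = ∅ <;> by_cases h2 : B \ C = ∅ <;>
      simp [h1, h2, hB, Finset.nonempty_iff_ne_empty]
  calc ∑ B ∈ A.powerset, (-1 : ℝ) ^ B.card *
        (if (B ∩ C).Nonempty ∧ (B \ C).Nonempty then 1 else 0)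
      = ∑ B ∈ A.powerset, ((-1 : ℝ) ^ B.card
          - (-1 : ℝ) ^ B.card * (if B ∩ C = ∅ then 1 else 0)
          - (-1 : ℝ) ^ B.card * (if B \ C = ∅ then 1 else 0)
          + (-1 : ℝ) ^ B.card * (if B = ∅ then 1 else 0)) := by
        refine Finset.sum_congr rfl fun B _ => ?_
        rw [hind B]; ring
    _ = (if A = ∅ then 1 else 0) - (if A \ C = ∅ then 1 else 0)
          - (if A ∩ C = ∅ then 1 else 0) + 1 := by
        rw [Finset.sum_add_distrib, Finset.sum_sub_distrib, Finset.sum_sub_distrib,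
          sum_pow_real]
        congr 1
        congr 1
        congr 1
        · -- ∑ B ∈ A.powerset, (-1)^card * ind (B ∩ C = ∅) = ind (A \ C = ∅)
          rw [← sum_pow_real (A \ C)]
          simp only [mul_ite, mul_one, mul_zero]
          rw [← Finset.sum_filter]
          congr 1
          ext B
          simp only [Finset.mem_filter, Finset.mem_powerset, Finset.subset_sdiff,
            Finset.disjoint_iff_inter_eq_empty]
        · rw [← sum_pow_real (A ∩ C)]
          simp only [mul_ite, mul_one, mul_zero]
          rw [← Finset.sum_filter]
          congr 1
          ext B
          simp only [Finset.mem_filter, Finset.mem_powerset,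
            Finset.sdiff_eq_empty_iff_subset, Finset.subset_inter_iff]
        · simp only [mul_ite, mul_one, mul_zero]
          rw [← Finset.sum_filter]
          have : A.powerset.filter (fun B => B = ∅) = {∅} := by
            ext B
            simp only [Finset.mem_filter, Finset.mem_powerset, Finset.mem_singleton]
            constructor
            · tauto
            · rintro rfl; simp
          rw [this]
          simp
    _ = (if (A ∩ C).Nonempty ∧ (A \ C).Nonempty then 1 else 0) := by
        have hA : A = ∅ ↔ A ∩ C = ∅ ∧ A \ C = ∅ := by
          constructor
          · rintro rfl; simp
          · rintro ⟨h1, h2⟩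
            have : A ∩ C ∪ A \ C = A := by ext x; by_cases hx : x ∈ C <;> simp [hx]
            rw [h1, h2] at this; simpa using this.symm
        by_cases h1 : A ∩ C = ∅ <;> by_cases h2 : A \ C = ∅ <;>
          simp [h1, h2, hA, Finset.nonempty_iff_ne_empty]

/-- Let `w` be a symmetrized split weight function on the finite
set `X` (here the type `α`): `w B ≥ 0` and `w B = w Bᶜ` for all `B ⊆ X`.  The
phylogenetic diversity of `A` is `δ A = ∑_{B : A ∩ B ≠ ∅, A ∖ B ≠ ∅} w B`.
Then for every subset `A`, `δ A = ∑_{B ⊆ A} (−1)^{|B|} δ B`. -/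
theorem diversity_alternating_sum
    {α : Type*} [Fintype α] [DecidableEq α]
    (w : Finset α → ℝ) (hw : ∀ B : Finset α, 0 ≤ w B)
    (hwsym : ∀ B : Finset α, w B = w Bᶜ)
    (δ : Finset α → ℝ)
    (hδ : ∀ A : Finset α, δ A =
      ∑ B ∈ univ.filter (fun B : Finset α => (A ∩ B).Nonempty ∧ (A \ B).Nonempty), w B)
    (A : Finset α) :
    δ A = ∑ B ∈ A.powerset, (-1 : ℝ) ^ B.card * δ B := by
  have hδ' : ∀ A : Finset α, δ A = ∑ C : Finset α,
      (if (A ∩ C).Nonempty ∧ (A \ C).Nonempty then 1 else 0) * w C := by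
    intro A
    rw [hδ A, Finset.sum_filter]
    refine Finset.sum_congr rfl fun C _ => ?_
    by_cases h : (A ∩ C).Nonempty ∧ (A \ C).Nonempty <;> simp [h]
  rw [hδ' A]
  have step : ∀ B ∈ A.powerset, (-1 : ℝ) ^ B.card * δ B
      = ∑ C : Finset α, (-1 : ℝ) ^ B.card
        * ((if (B ∩ C).Nonempty ∧ (B \ C).Nonempty then 1 else 0) * w C) :=
    fun B _ => by rw [hδ' B, Finset.mul_sum]
  rw [Finset.sum_congr rfl step, Finset.sum_comm]
  refine Finset.sum_congr rfl fun C _ => ?_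
  rw [← key A C, Finset.sum_mul]
  refine Finset.sum_congr rfl fun B _ => ?_
  ring
end

section
/- If A ⊆ X has odd cardinality, then δ_A = ∑_{B ⊊ A, |B| even} (𝕋_{|A|−|B|} / 2^{|A|−|B|}) · δ_B, where the sum is over all proper subsets B of A of even cardinality. -/
open Finset

/-- The tangent numbers `𝕋ₖ`, defined by the EGF `tanh x = ∑ₖ 𝕋ₖ xᵏ/k!`;
equivalently `𝕋ₖ = 2^(k+1)(2^(k+1)−1)𝔹_{k+1}/(k+1)` for `k ≥ 1`
(and `𝕋₀ = 0`, so `𝕋₁ = 1`, `𝕋₃ = −2`, `𝕋ₖ = 0` for even `k`). -/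
noncomputable def tangentNumber (k : ℕ) : ℚ :=
  if k = 0 then 0
  else 2 ^ (k + 1) * (2 ^ (k + 1) - 1) * bernoulli (k + 1) / (k + 1)

/-!
Expanding every `δ_B` into split weights and exchanging the sums, it suffices to show for each
split `C` that `∑ c_{|A|-|B|}`, over the even `B ⊊ A` split by `C`, is `1` or `0` according as
`C` splits `A` or not; here `c_k = 𝕋_k / 2^k` is `k!` times the `k`-th coefficient of
`tanh (x/2)`. As `c` vanishes at even arguments, the sum may run over all `B ⊆ A`, and
inclusion–exclusion over `B ⊆ A ∩ C`, `B ⊆ A ∖ C` turns it into binomial sums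
`G(t, u) = ∑ₘ (u choose m) c(t + u - m)`.

The identity `(eˣ + 1) tanh (x/2) = eˣ - 1` gives `G(0, a) + c(a) = 1` for `a ≥ 1`. Both `G`
and `(-1)^(t+u) G(u, t) - G(t, u)` obey Pascal's rule `H(t, u+1) = H(t, u) + H(t+1, u)`, so the
latter is the binomial sum of its row `u = 0`, which is `(-1)^s` away from `s = 0`; hence
`G(t, u) + G(u, t) = 0` whenever `t + u` is odd and `t, u > 0`.
-/

section BinomSum

variable {R : Type*} [CommRing R]

def binomSum (c : ℕ → R) (t u : ℕ) : R :=
  ∑ m ∈ range (u + 1), (u.choose m : R) * c (t + u - m)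

@[simp]
theorem binomSum_zero_right (c : ℕ → R) (t : ℕ) : binomSum c t 0 = c t := by
  simp [binomSum]

theorem binomSum_succ_right (c : ℕ → R) (t u : ℕ) :
    binomSum c t (u + 1) = binomSum c t u + binomSum c (t + 1) u := by
  rw [add_comm (binomSum c t u), binomSum, binomSum, binomSum]
  convert sum_choose_succ_mul (fun _ k => c (t + k)) u using 1
  · exact sum_congr rfl fun m hm => by grind
  · congr 1 <;> exact sum_congr rfl fun m hm => by grind

theorem binomSum_congr {c c' : ℕ → R} {t : ℕ} (h : ∀ s, t ≤ s → c s = c' s) (u : ℕ) :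
    binomSum c t u = binomSum c' t u :=
  sum_congr rfl fun m hm => by rw [h _ (by grind)]

theorem binomSum_pow (r : R) (t u : ℕ) : binomSum (r ^ ·) t u = r ^ t * (r + 1) ^ u := by
  rw [binomSum, add_comm r, add_pow, mul_sum]
  refine sum_congr rfl fun m hm => ?_
  rw [show t + u - m = t + (u - m) by grind, pow_add]
  ring

theorem eq_binomSum_of_pascal {H : ℕ → ℕ → R} (hH : ∀ t u, H t (u + 1) = H t u + H (t + 1) u)
    (t u : ℕ) : H t u = binomSum (H · 0) t u := by
  induction u generalizing t with
  | zero => simp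
  | succ u ih => rw [hH, binomSum_succ_right, ih, ih]

theorem binomSum_add_binomSum_swap {c : ℕ → R} (hc_even : ∀ k, Even k → c k = 0)
    (hc_rec : ∀ a, a ≠ 0 → binomSum c 0 a + c a = 1) {t u : ℕ} (ht : t ≠ 0) (hu : u ≠ 0)
    (htu : Odd (t + u)) : binomSum c t u + binomSum c u t = 0 := by
  set H : ℕ → ℕ → R := fun t u => (-1) ^ (t + u) * binomSum c u t - binomSum c t u with hH
  have hpascal : ∀ t u, H t (u + 1) = H t u + H (t + 1) u := by
    intro t u
    simp only [hH]
    linear_combination (-1) ^ (t + u) * binomSum_succ_right c u t - binomSum_succ_right c t u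
  have hrow : ∀ s, s ≠ 0 → H s 0 = (-1) ^ s := by
    intro s hs
    have := hc_rec s hs
    rcases Nat.even_or_odd s with he | ho
    · simp only [hH, add_zero, he.neg_one_pow, hc_even s he, one_mul, binomSum_zero_right,
        sub_zero] at this ⊢
      linear_combination this
    · simp only [hH, add_zero, ho.neg_one_pow, neg_mul, one_mul, binomSum_zero_right] at this ⊢
      linear_combination -this
  have := eq_binomSum_of_pascal hpascal t u
  rw [binomSum_congr (fun s hs => hrow s (by omega)), binomSum_pow, neg_add_cancel,
    zero_pow hu, mul_zero] at this
  simp only [hH, htu.neg_one_pow] at this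
  linear_combination -this

end BinomSum

section TangentNumber

open PowerSeries Nat

theorem tangentNumber_eq_zero_of_even {k : ℕ} (hk : Even k) : tangentNumber k = 0 := by
  rcases eq_or_ne k 0 with rfl | hk0
  · simp [tangentNumber]
  · simp [tangentNumber, hk0, bernoulli_eq_zero_of_odd hk.add_one (by omega)]

variable (K : Type*) [Field K] [CharZero K]

/- `tanh (x/2) = 1 - 2/(eˣ + 1)` and `x/(eˣ + 1) = x/(eˣ - 1) - 2x/(e²ˣ - 1)`. -/
theorem X_mul_mk_tangentNumber :
    X * PowerSeries.mk (fun k => (tangentNumber k : K) / 2 ^ k / k !) =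
      X - C 2 * (bernoulliPowerSeries K - rescale 2 (bernoulliPowerSeries K)) := by
  ext (_ | k)
  · simp only [coeff_zero_X_mul, map_sub, coeff_C_mul, coeff_rescale, coeff_zero_X, pow_zero,
      one_mul, sub_self, mul_zero]
  · rw [coeff_succ_X_mul]
    rcases eq_or_ne k 0 with rfl | hk0
    · norm_num [bernoulliPowerSeries, tangentNumber, coeff_X, bernoulli_one]
    · simp only [bernoulliPowerSeries, tangentNumber, coeff_mk, coeff_X, coeff_C_mul, coeff_rescale,
        map_sub, map_div₀, eq_ratCast, map_natCast, Nat.add_eq_right, hk0, if_false, zero_sub]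
      push_cast [factorial_succ]
      field_simp
      ring

theorem exp_add_one_mul_mk_tangentNumber :
    (exp K + 1) * PowerSeries.mk (fun k => (tangentNumber k : K) / 2 ^ k / k !) = exp K - 1 := by
  have hB := bernoulliPowerSeries_mul_exp_sub_one K
  have hexp : rescale 2 (exp K) = exp K * exp K := by
    rw [← one_add_one_eq_two, ← exp_mul_exp_eq_exp_add, rescale_one, RingHom.id_apply]
  have hB2 : rescale 2 (bernoulliPowerSeries K) * (exp K * exp K - 1) = C 2 * X := by
    simpa [hexp] using congrArg (rescale (2 : K)) hB
  have hC : (C 2 : K⟦X⟧) = 2 := map_ofNat C 2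
  have hne : (exp K - 1) * X ≠ 0 := by
    refine mul_ne_zero (fun h => ?_) X_ne_zero
    simpa using congrArg (coeff 1) h
  refine mul_left_cancel₀ hne ?_
  linear_combination (exp K - 1) * (exp K + 1) * X_mul_mk_tangentNumber K
    - C 2 * (exp K + 1) * hB + C 2 * hB2 - X * (exp K - C 2 - 1) * hC

theorem binomSum_tangentNumber_add {a : ℕ} (ha : a ≠ 0) :
    binomSum (fun k => (tangentNumber k : K) / 2 ^ k) 0 a + tangentNumber a / 2 ^ a = 1 := by
  have h := congrArg (coeff a) (exp_add_one_mul_mk_tangentNumber K)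
  simp only [add_mul, one_mul, map_add, map_sub, coeff_mul, coeff_exp, coeff_mk, coeff_one, ha,
    if_false, sub_zero, Nat.sum_antidiagonal_eq_sum_range_succ
      (fun i j => algebraMap ℚ K (1 / i !) * ((tangentNumber j : K) / 2 ^ j / j !))] at h
  have hterm : ∀ m ∈ range (a + 1),
      (a.choose m : K) * (tangentNumber (0 + a - m) / 2 ^ (0 + a - m)) =
        a ! * (algebraMap ℚ K (1 / m !) * (tangentNumber (a - m) / 2 ^ (a - m) / (a - m)!)) := by
    intro m hm
    rw [zero_add, Nat.cast_choose K (by grind)]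
    simp only [one_div, map_inv₀, map_natCast]
    field_simp
  rw [binomSum, sum_congr rfl hterm, ← mul_sum]
  rw [Nat.succ_eq_add_one] at h
  set S := ∑ m ∈ range (a + 1), algebraMap ℚ K (1 / m !) *
    (tangentNumber (a - m) / 2 ^ (a - m) / (a - m)!)
  simp only [one_div, map_inv₀, map_natCast] at h
  have hfac : (a ! : K) ≠ 0 := Nat.cast_ne_zero.mpr a.factorial_ne_zero
  calc (a ! : K) * S + tangentNumber a / 2 ^ a
      = a ! * (S + tangentNumber a / 2 ^ a / a !) := by rw [mul_add, mul_div_cancel₀ _ hfac]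
    _ = 1 := by rw [h, mul_inv_cancel₀ hfac]

end TangentNumber

section Splits

variable {R : Type*} [CommRing R] {α : Type*}

theorem sum_powerset_eq_binomSum (c : ℕ → R) (t : ℕ) (U : Finset α) :
    ∑ B ∈ U.powerset, c (t + #U - #B) = binomSum c t #U := by
  rw [sum_powerset_apply_card (fun k => c (t + #U - k))]
  simp [binomSum, nsmul_eq_mul]

variable [DecidableEq α]

theorem sum_powerset_filter_separated (c : ℕ → R) (A C : Finset α) :
    ∑ B ∈ A.powerset with (B ∩ C).Nonempty ∧ (B \ C).Nonempty, c (#A - #B) =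
      binomSum c 0 #A + c #A - binomSum c #(A \ C) #(A ∩ C) - binomSum c #(A ∩ C) #(A \ C) := by
  have hnot : {B ∈ A.powerset | ¬((B ∩ C).Nonempty ∧ (B \ C).Nonempty)} =
      (A ∩ C).powerset ∪ (A \ C).powerset := by
    ext B
    simp only [mem_filter, mem_powerset, mem_union, not_and_or, not_nonempty_iff_eq_empty,
      subset_inter_iff, subset_sdiff, sdiff_eq_empty_iff_subset, disjoint_iff_inter_eq_empty]
    tauto
  have hinter : (A ∩ C).powerset ∩ (A \ C).powerset = {∅} := by
    ext B
    simp only [mem_inter, mem_powerset, mem_singleton, ← subset_inter_iff,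
      disjoint_iff_inter_eq_empty.mp (disjoint_sdiff_inter A C).symm, subset_empty]
  have hall := sum_filter_add_sum_filter_not A.powerset
    (fun B => (B ∩ C).Nonempty ∧ (B \ C).Nonempty) (fun B => c (#A - #B))
  have hunion := sum_union_inter (s₁ := (A ∩ C).powerset) (s₂ := (A \ C).powerset)
    (f := fun B => c (#A - #B))
  have hcard : #A = #(A \ C) + #(A ∩ C) := (card_sdiff_add_card_inter A C).symm
  have hP : ∑ B ∈ A.powerset, c (#A - #B) = binomSum c 0 #A := by
    simpa using sum_powerset_eq_binomSum c 0 A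
  have hT : ∑ B ∈ (A ∩ C).powerset, c (#A - #B) = binomSum c #(A \ C) #(A ∩ C) := by
    rw [← sum_powerset_eq_binomSum, ← hcard]
  have hU : ∑ B ∈ (A \ C).powerset, c (#A - #B) = binomSum c #(A ∩ C) #(A \ C) := by
    rw [← sum_powerset_eq_binomSum, add_comm, ← hcard]
  rw [hnot, hP] at hall
  rw [hinter, sum_singleton, card_empty, Nat.sub_zero, hT, hU] at hunion
  linear_combination hall - hunion

theorem sum_ssubset_even_separated {c : ℕ → R} (hc_even : ∀ k, Even k → c k = 0)
    (hc_rec : ∀ a, a ≠ 0 → binomSum c 0 a + c a = 1) [Fintype α] {A : Finset α} (hA : Odd #A)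
    (C : Finset α) :
    ∑ B ∈ univ.filter (fun B : Finset α => B ⊂ A ∧ Even #B),
        (if (B ∩ C).Nonempty ∧ (B \ C).Nonempty then c (#A - #B) else 0) =
      if (A ∩ C).Nonempty ∧ (A \ C).Nonempty then 1 else 0 := by
  have hpowerset : ∑ B ∈ univ.filter (fun B : Finset α => B ⊂ A ∧ Even #B),
      (if (B ∩ C).Nonempty ∧ (B \ C).Nonempty then c (#A - #B) else 0) =
        ∑ B ∈ A.powerset, (if (B ∩ C).Nonempty ∧ (B \ C).Nonempty then c (#A - #B) else 0) := by
    refine sum_subset (fun B hB => mem_powerset.mpr (mem_filter.mp hB).2.1.subset) ?_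
    intro B hBA hB
    rw [mem_powerset] at hBA
    have heven : Even (#A - #B) := by
      rcases hBA.eq_or_ssubset with rfl | hssub
      · simp
      · have hodd : Odd #B := Nat.not_even_iff_odd.mp fun he => hB (by simp [hssub, he])
        exact Nat.Odd.sub_odd hA hodd
    rw [hc_even _ heven, ite_self]
  rw [hpowerset, ← sum_filter]
  split_ifs with h
  · have hswap := binomSum_add_binomSum_swap hc_even hc_rec (card_ne_zero.mpr h.2)
      (card_ne_zero.mpr h.1) (by rwa [card_sdiff_add_card_inter])
    rw [sum_powerset_filter_separated]
    linear_combination hc_rec (#A) (card_ne_zero.mpr (h.1.mono inter_subset_left)) - hswap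
  · refine sum_eq_zero fun B hB => absurd ?_ h
    obtain ⟨hBA, hBC, hBC'⟩ := by simpa only [mem_filter, mem_powerset] using hB
    exact ⟨hBC.mono (by gcongr), hBC'.mono (by gcongr)⟩

theorem sum_mul_sum_separated [Fintype α] (w k : Finset α → R) (s : Finset (Finset α)) :
    ∑ B ∈ s, k B *
        ∑ C ∈ univ.filter (fun C : Finset α => (B ∩ C).Nonempty ∧ (B \ C).Nonempty), w C =
      ∑ C, (∑ B ∈ s, if (B ∩ C).Nonempty ∧ (B \ C).Nonempty then k B else 0) * w C := by
  simp_rw [sum_filter, mul_sum, sum_mul, mul_ite, ite_mul, mul_zero, zero_mul]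
  exact sum_comm

end Splits

theorem diversity_odd_from_even_general
    {α : Type*} [Fintype α] [DecidableEq α]
    (w : Finset α → ℝ)
    (δ : Finset α → ℝ)
    (hδ : ∀ A : Finset α, δ A =
      ∑ B ∈ univ.filter (fun B : Finset α => (A ∩ B).Nonempty ∧ (A \ B).Nonempty), w B)
    (A : Finset α) (hA : Odd A.card) :
    δ A = ∑ B ∈ univ.filter (fun B : Finset α => B ⊂ A ∧ Even B.card),
      (tangentNumber (A.card - B.card) : ℝ) / 2 ^ (A.card - B.card) * δ B := by
  have hsplit := sum_ssubset_even_separated (c := fun k => (tangentNumber k : ℝ) / 2 ^ k)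
    (fun k hk => by simp [tangentNumber_eq_zero_of_even hk])
    (fun a ha => binomSum_tangentNumber_add ℝ ha) hA
  simp only [hδ]
  rw [sum_mul_sum_separated, sum_filter]
  refine sum_congr rfl fun C _ => ?_
  rw [hsplit C, ite_mul, one_mul, zero_mul]

/-- For a symmetrized split weight function `w` with phylogenetic
diversity `δ A = ∑_{B : A ∩ B ≠ ∅, A ∖ B ≠ ∅} w B`: if `A` has odd cardinality then
`δ A = ∑_{B ⊊ A, |B| even} (𝕋_{|A|−|B|}/2^{|A|−|B|}) δ B`. -/
theorem diversity_odd_from_even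
    {α : Type*} [Fintype α] [DecidableEq α]
    (w : Finset α → ℝ) (hw : ∀ B : Finset α, 0 ≤ w B)
    (hwsym : ∀ B : Finset α, w B = w Bᶜ)
    (δ : Finset α → ℝ)
    (hδ : ∀ A : Finset α, δ A =
      ∑ B ∈ univ.filter (fun B : Finset α => (A ∩ B).Nonempty ∧ (A \ B).Nonempty), w B)
    (A : Finset α) (hA : Odd A.card) :
    δ A = ∑ B ∈ univ.filter (fun B : Finset α => B ⊂ A ∧ Even B.card),
      (tangentNumber (A.card - B.card) : ℝ) / 2 ^ (A.card - B.card) * δ B :=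
  diversity_odd_from_even_general w δ hδ A hA
end

section
/- For every subset B with ∅ ⊊ B ⊊ X, the symmetrized split weight is recovered from the phylogenetic diversities by w̃_B = (1/2) ∑_{A : B ⊆ A ⊆ X} (−1)^{|A|−|B|+1} δ_A. -/
open Finset

lemma alt_sum_powerset_real {α : Type*} [DecidableEq α] (T : Finset α) :
    ∑ S ∈ T.powerset, (-1 : ℝ) ^ S.card = if T = ∅ then 1 else 0 := by
  have := Finset.sum_powerset_neg_one_pow_card (x := T)
  have : ((∑ m ∈ T.powerset, (-1 : ℤ) ^ m.card : ℤ) : ℝ)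
      = ((if T = ∅ then 1 else 0 : ℤ) : ℝ) := by rw [this]
  push_cast at this
  simpa using this

lemma alt_sum_subsets {α : Type*} [DecidableEq α] (T D : Finset α) (hD : D ⊆ T) :
    ∑ S ∈ T.powerset, (-1 : ℝ) ^ S.card * (if S ⊆ D then 1 else 0)
      = if D = ∅ then 1 else 0 := by
  simp only [mul_ite, mul_one, mul_zero]
  rw [← Finset.sum_filter]
  have hfil : T.powerset.filter (fun S => S ⊆ D) = D.powerset := by
    ext S
    simp only [mem_filter, mem_powerset]
    exact ⟨fun h => h.2, fun h => ⟨h.trans hD, h⟩⟩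
  rw [hfil, alt_sum_powerset_real]

lemma key_sum {α : Type*} [Fintype α] [DecidableEq α]
    (B C : Finset α) (hB : B.Nonempty) (hBX : B ≠ univ) :
    ∑ A ∈ univ.filter (fun A : Finset α => B ⊆ A),
      (-1 : ℝ) ^ (A.card - B.card + 1) *
        (if (A ∩ C).Nonempty ∧ (A \ C).Nonempty then 1 else 0)
    = (if C = B then 1 else 0) + (if C = Bᶜ then 1 else 0) := by
  -- reindex by S = A \ B over powerset of Bᶜ
  have reindex : ∑ A ∈ univ.filter (fun A : Finset α => B ⊆ A),
      (-1 : ℝ) ^ (A.card - B.card + 1) *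
        (if (A ∩ C).Nonempty ∧ (A \ C).Nonempty then 1 else 0)
      = ∑ S ∈ Bᶜ.powerset, (-1 : ℝ) ^ (S.card + 1) *
        (if ((B ∪ S) ∩ C).Nonempty ∧ ((B ∪ S) \ C).Nonempty then 1 else 0) := by
    refine Finset.sum_bij' (fun A _ => A \ B) (fun S _ => B ∪ S) ?_ ?_ ?_ ?_ ?_
    · intro A hA
      simp only [mem_filter, mem_univ, true_and] at hA
      simp only [mem_powerset]
      intro x hx
      simp only [mem_sdiff] at hx
      simp [mem_compl, hx.2]
    · intro S hS
      simp only [mem_powerset] at hS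
      simp only [mem_filter, mem_univ, true_and]
      exact subset_union_left
    · intro A hA
      simp only [mem_filter, mem_univ, true_and] at hA
      exact union_sdiff_of_subset hA
    · intro S hS
      simp only [mem_powerset] at hS
      have : Disjoint B S := by
        rw [Finset.disjoint_left]
        intro x hx hxS
        have := hS hxS
        simp [mem_compl, hx] at this
      show (B ∪ S) \ B = S
      rw [union_sdiff_cancel_left this]
    · intro A hA
      simp only [mem_filter, mem_univ, true_and] at hA
      rw [card_sdiff_of_subset hA, union_sdiff_of_subset hA]
  rw [reindex]
  -- now the sum over S ∈ Bᶜ.powerset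
  have hBne : Bᶜ ≠ ∅ := by
    intro h
    apply hBX
    rw [← compl_compl B, h, compl_empty]
  have step : ∀ S ∈ Bᶜ.powerset,
      (-1 : ℝ) ^ (S.card + 1) *
        (if ((B ∪ S) ∩ C).Nonempty ∧ ((B ∪ S) \ C).Nonempty then 1 else 0)
      = -((-1 : ℝ) ^ S.card)
        + (-1 : ℝ) ^ S.card * (if B ∩ C = ∅ then (if S ⊆ Bᶜ \ C then (1:ℝ) else 0) else 0)
        + (-1 : ℝ) ^ S.card * (if B ⊆ C then (if S ⊆ Bᶜ ∩ C then (1:ℝ) else 0) else 0) := by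
    intro S hS
    simp only [mem_powerset] at hS
    have hP : ((B ∪ S) ∩ C).Nonempty ↔ ¬ (B ∩ C = ∅ ∧ S ⊆ Bᶜ \ C) := by
      rw [Finset.nonempty_iff_ne_empty]
      constructor
      · intro h hc
        apply h
        rw [union_inter_distrib_right, hc.1, empty_union, ← Finset.subset_empty]
        intro x hx
        simp only [mem_inter] at hx
        have := hc.2 hx.1
        simp only [mem_sdiff] at this
        exact absurd hx.2 this.2
      · intro h hc
        apply h
        constructor
        · rw [← Finset.subset_empty, ← hc]
          exact inter_subset_inter subset_union_left le_rfl
        · intro x hx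
          simp only [mem_sdiff]
          refine ⟨hS hx, fun hxC => ?_⟩
          have : x ∈ (B ∪ S) ∩ C := by simp [mem_inter, mem_union, hx, hxC]
          rw [hc] at this
          exact absurd this (notMem_empty x)
    have hQ : ((B ∪ S) \ C).Nonempty ↔ ¬ (B ⊆ C ∧ S ⊆ Bᶜ ∩ C) := by
      rw [Finset.nonempty_iff_ne_empty]
      constructor
      · intro h hc
        apply h
        rw [← Finset.subset_empty]
        intro x hx
        simp only [mem_sdiff, mem_union] at hx
        rcases hx.1 with hxB | hxS
        · exact absurd (hc.1 hxB) hx.2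
        · have := hc.2 hxS
          simp only [mem_inter] at this
          exact absurd this.2 hx.2
      · intro h hc
        apply h
        constructor
        · intro x hx
          by_contra hxC
          have : x ∈ (B ∪ S) \ C := by simp [mem_sdiff, mem_union, hx, hxC]
          rw [hc] at this
          exact absurd this (notMem_empty x)
        · intro x hx
          simp only [mem_inter]
          refine ⟨hS hx, ?_⟩
          by_contra hxC
          have : x ∈ (B ∪ S) \ C := by simp [mem_sdiff, mem_union, hx, hxC]
          rw [hc] at this
          exact absurd this (notMem_empty x)
    have hnotboth : ¬ ((B ∩ C = ∅ ∧ S ⊆ Bᶜ \ C) ∧ (B ⊆ C ∧ S ⊆ Bᶜ ∩ C)) := by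
      rintro ⟨⟨h1, _⟩, ⟨h2, _⟩⟩
      obtain ⟨x, hx⟩ := hB
      have : x ∈ B ∩ C := mem_inter.2 ⟨hx, h2 hx⟩
      rw [h1] at this
      exact absurd this (notMem_empty x)
    simp only [hP, hQ, pow_succ]
    simp only [← ite_and]
    by_cases h1 : B ∩ C = ∅ ∧ S ⊆ Bᶜ \ C <;> by_cases h2 : B ⊆ C ∧ S ⊆ Bᶜ ∩ C
    · exact absurd ⟨h1, h2⟩ hnotboth
    · simp [h1, h2]
      try ring
    · simp [h1, h2]
      try ring
    · simp [h1, h2]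
      try ring
  rw [Finset.sum_congr rfl step]
  simp only [Finset.sum_add_distrib]
  rw [Finset.sum_neg_distrib, alt_sum_powerset_real, if_neg hBne, neg_zero]
  have e2 : ∑ S ∈ Bᶜ.powerset,
      (-1 : ℝ) ^ S.card * (if B ∩ C = ∅ then (if S ⊆ Bᶜ \ C then (1:ℝ) else 0) else 0)
      = if C = Bᶜ then 1 else 0 := by
    by_cases hb : B ∩ C = ∅
    · simp only [hb, if_true]
      rw [alt_sum_subsets _ _ (sdiff_subset)]
      have : (Bᶜ \ C = ∅) ↔ (C = Bᶜ) := by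
        constructor
        · intro h
          apply Finset.Subset.antisymm
          · intro x hx
            simp only [mem_compl]
            intro hxB
            have : x ∈ B ∩ C := mem_inter.2 ⟨hxB, hx⟩
            rw [hb] at this
            exact absurd this (notMem_empty x)
          · intro x hx
            by_contra hxC
            have : x ∈ Bᶜ \ C := mem_sdiff.2 ⟨hx, hxC⟩
            rw [h] at this
            exact absurd this (notMem_empty x)
        · intro h
          simp [h]
      simp [this]
    · simp only [hb, if_false, mul_zero, Finset.sum_const_zero]
      have : C ≠ Bᶜ := by
        intro h
        apply hb
        rw [h, ← Finset.subset_empty]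
        intro x hx
        simp only [mem_inter, mem_compl] at hx
        exact absurd hx.1 hx.2
      simp [this]
  have e3 : ∑ S ∈ Bᶜ.powerset,
      (-1 : ℝ) ^ S.card * (if B ⊆ C then (if S ⊆ Bᶜ ∩ C then (1:ℝ) else 0) else 0)
      = if C = B then 1 else 0 := by
    by_cases hc : B ⊆ C
    · simp only [hc, if_true]
      rw [alt_sum_subsets _ _ (inter_subset_left)]
      have : (Bᶜ ∩ C = ∅) ↔ (C = B) := by
        constructor
        · intro h
          apply Finset.Subset.antisymm
          · intro x hx
            by_contra hxB
            have : x ∈ Bᶜ ∩ C := mem_inter.2 ⟨mem_compl.2 hxB, hx⟩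
            rw [h] at this
            exact absurd this (notMem_empty x)
          · exact hc
        · intro h
          rw [h, ← Finset.subset_empty]
          intro x hx
          simp only [mem_inter, mem_compl] at hx
          exact absurd hx.2 hx.1
      simp [this]
    · simp only [hc, if_false, mul_zero, Finset.sum_const_zero]
      have : C ≠ B := fun h => hc (h ▸ le_rfl)
      simp [this]
  rw [e2, e3]
  ring

/-- For a symmetrized split weight function `w` with phylogenetic
diversity `δ A = ∑_{B : A ∩ B ≠ ∅, A ∖ B ≠ ∅} w B`: for every subset `B` with
`∅ ⊊ B ⊊ X`, the split weight is recovered by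
`w B = (1/2) ∑_{A ⊇ B} (−1)^{|A|−|B|+1} δ A`. -/
theorem split_weight_from_diversity
    {α : Type*} [Fintype α] [DecidableEq α]
    (w : Finset α → ℝ) (hw : ∀ B : Finset α, 0 ≤ w B)
    (hwsym : ∀ B : Finset α, w B = w Bᶜ)
    (δ : Finset α → ℝ)
    (hδ : ∀ A : Finset α, δ A =
      ∑ B ∈ univ.filter (fun B : Finset α => (A ∩ B).Nonempty ∧ (A \ B).Nonempty), w B)
    (B : Finset α) (hB : B.Nonempty) (hBX : B ≠ univ) :
    w B = 1 / 2 * ∑ A ∈ univ.filter (fun A : Finset α => B ⊆ A),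
        (-1 : ℝ) ^ (A.card - B.card + 1) * δ A := by
  have main : ∑ A ∈ univ.filter (fun A : Finset α => B ⊆ A),
      (-1 : ℝ) ^ (A.card - B.card + 1) * δ A = 2 * w B := by
    calc ∑ A ∈ univ.filter (fun A : Finset α => B ⊆ A),
        (-1 : ℝ) ^ (A.card - B.card + 1) * δ A
        = ∑ A ∈ univ.filter (fun A : Finset α => B ⊆ A), ∑ C : Finset α,
            (-1 : ℝ) ^ (A.card - B.card + 1) *
              (if (A ∩ C).Nonempty ∧ (A \ C).Nonempty then w C else 0) := by
          refine Finset.sum_congr rfl fun A _ => ?_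
          rw [hδ A, Finset.sum_filter, Finset.mul_sum]
      _ = ∑ C : Finset α, ∑ A ∈ univ.filter (fun A : Finset α => B ⊆ A),
            (-1 : ℝ) ^ (A.card - B.card + 1) *
              (if (A ∩ C).Nonempty ∧ (A \ C).Nonempty then w C else 0) :=
          Finset.sum_comm
      _ = ∑ C : Finset α, w C *
            ((if C = B then 1 else 0) + (if C = Bᶜ then 1 else 0)) := by
          refine Finset.sum_congr rfl fun C _ => ?_
          rw [← key_sum B C hB hBX, Finset.mul_sum]
          refine Finset.sum_congr rfl fun A _ => ?_
          by_cases h : (A ∩ C).Nonempty ∧ (A \ C).Nonempty <;> simp [h] <;> ring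
      _ = 2 * w B := by
          simp only [mul_add, Finset.sum_add_distrib, mul_ite, mul_one, mul_zero,
            Finset.sum_ite_eq', mem_univ, if_true]
          rw [← hwsym B]
          ring
  rw [main]; ring
end

section
/- Define μ_A = ∑_{B ⊆ X : |A ∩ B| odd} w̃_B when |A| is even, and μ_A = 0 when |A| is odd. Then for every A ⊆ X one has μ_A = ∑_{B ⊆ A} (−2)^{|B|−2} δ_B, and for every B ⊆ X one has δ_B = 2^{−(|B|−2)} ∑_{A ⊆ B} μ_A. -/
/-!
Both identities are linear in `w`, so it suffices to compare the coefficients of one split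
weight `w C`. Split subsets `B` into `B ∩ C` and `B \ C`, and write `[n odd] = (1 - (-1) ^ n) / 2`
and `[n ≠ 0] = 1 - 0 ^ n`. Each coefficient then becomes a product of a sum over the subsets of
`A ∩ C` and one over the subsets of `A \ C`, and both are evaluated by
`∑_{T ⊆ S} (x ^ |T| - y ^ |T|) = (x + 1) ^ |S| - (y + 1) ^ |S|`.
For `(x, y) = (-2, 0)` this turns the split indicator weighted by `(-2) ^ (|B| - 2)` into
`[|A ∩ C| odd] [|A \ C| odd]`, the coefficient of `w C` in `μ A`; for `(x, y) = (1, -1)` it turns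
the latter back into `2 ^ (|B| - 2)` times the split indicator.
-/

open Finset

theorem ite_even_add_and_odd (s t : ℕ) :
    (if Even (s + t) ∧ Odd s then (1 : ℝ) else 0) = (1 - (-1) ^ s) * (1 - (-1) ^ t) / 4 := by
  by_cases hs : Even s <;> by_cases ht : Even t <;>
    simp [hs, ht, Nat.even_add, ← Nat.not_even_iff_odd, Odd.neg_one_pow, Nat.not_even_iff_odd.mp]
  norm_num

theorem ite_ne_zero_and_ne_zero_zpow {x : ℝ} (hx : x ≠ 0) (s t : ℕ) :
    (if s ≠ 0 ∧ t ≠ 0 then x ^ (((s + t : ℕ) : ℤ) - 2) else 0) =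
      (x ^ s - 0 ^ s) * (x ^ t - 0 ^ t) / x ^ 2 := by
  rcases eq_or_ne s 0 with rfl | hs
  · simp
  rcases eq_or_ne t 0 with rfl | ht
  · simp
  rw [if_pos ⟨hs, ht⟩, zero_pow hs, zero_pow ht, zpow_sub₀ hx, zpow_natCast, pow_add]
  norm_cast
  ring

section PowersetSums

variable {α R : Type*}

theorem sum_powerset_pow_card [CommSemiring R] (x : R) (S : Finset α) :
    ∑ T ∈ S.powerset, x ^ #T = (x + 1) ^ #S := by
  simpa using sum_pow_mul_eq_add_pow x 1 S

theorem sum_powerset_pow_card_sub_pow_card [CommRing R] (x y : R) (S : Finset α) :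
    ∑ T ∈ S.powerset, (x ^ #T - y ^ #T) = (x + 1) ^ #S - (y + 1) ^ #S := by
  rw [sum_sub_distrib, sum_powerset_pow_card, sum_powerset_pow_card]

variable [DecidableEq α]

theorem sum_powerset_mul_inter_sdiff [CommSemiring R] (S C : Finset α) (f g : Finset α → R) :
    ∑ B ∈ S.powerset, f (B ∩ C) * g (B \ C) =
      (∑ B ∈ (S ∩ C).powerset, f B) * ∑ B ∈ (S \ C).powerset, g B := by
  rw [sum_mul_sum, ← sum_product']
  refine sum_nbij' (fun B ↦ (B ∩ C, B \ C)) (fun p ↦ p.1 ∪ p.2) ?_ ?_ ?_ ?_ fun _ _ ↦ rfl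
  · intro B hB
    simp only [mem_powerset, mem_product] at hB ⊢
    exact ⟨inter_subset_inter_right hB, sdiff_subset_sdiff hB Subset.rfl⟩
  · rintro ⟨B₁, B₂⟩ h
    simp only [mem_powerset, mem_product] at h ⊢
    exact union_subset (h.1.trans inter_subset_left) (h.2.trans sdiff_subset)
  · intro B _
    exact sup_inf_sdiff B C
  · rintro ⟨B₁, B₂⟩ h
    simp only [mem_powerset, mem_product, subset_iff, mem_inter, mem_sdiff] at h
    ext x <;> grind

theorem sum_powerset_mul_pow_card_inter_sdiff [CommRing R] (x y : R) (S C : Finset α) :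
    ∑ B ∈ S.powerset, (x ^ #(B ∩ C) - y ^ #(B ∩ C)) * (x ^ #(B \ C) - y ^ #(B \ C)) =
      ((x + 1) ^ #(S ∩ C) - (y + 1) ^ #(S ∩ C)) *
        ((x + 1) ^ #(S \ C) - (y + 1) ^ #(S \ C)) := by
  rw [sum_powerset_mul_inter_sdiff S C (fun T ↦ x ^ #T - y ^ #T) (fun T ↦ x ^ #T - y ^ #T),
    sum_powerset_pow_card_sub_pow_card, sum_powerset_pow_card_sub_pow_card]

theorem ite_splits_zpow {x : ℝ} (hx : x ≠ 0) (B C : Finset α) :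
    (if (B ∩ C).Nonempty ∧ (B \ C).Nonempty then x ^ ((#B : ℤ) - 2) else 0) =
      (x ^ #(B ∩ C) - 0 ^ #(B ∩ C)) * (x ^ #(B \ C) - 0 ^ #(B \ C)) / x ^ 2 := by
  simp_rw [← ite_ne_zero_and_ne_zero_zpow hx, card_inter_add_card_sdiff, card_ne_zero]

theorem ite_even_and_odd_inter (A C : Finset α) :
    (if Even #A ∧ Odd #(A ∩ C) then (1 : ℝ) else 0) =
      (1 - (-1) ^ #(A ∩ C)) * (1 - (-1) ^ #(A \ C)) / 4 := by
  rw [← ite_even_add_and_odd, card_inter_add_card_sdiff]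

theorem sum_powerset_splits_neg_two_zpow (A C : Finset α) :
    ∑ B ∈ A.powerset,
        (if (B ∩ C).Nonempty ∧ (B \ C).Nonempty then (-2 : ℝ) ^ ((#B : ℤ) - 2) else 0) =
      if Even #A ∧ Odd #(A ∩ C) then 1 else 0 := by
  simp_rw [ite_splits_zpow (x := -2) (by norm_num), ← sum_div,
    sum_powerset_mul_pow_card_inter_sdiff, ite_even_and_odd_inter]
  norm_num
  ring

theorem sum_powerset_even_and_odd_inter (B C : Finset α) :
    ∑ A ∈ B.powerset, (if Even #A ∧ Odd #(A ∩ C) then (1 : ℝ) else 0) =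
      if (B ∩ C).Nonempty ∧ (B \ C).Nonempty then 2 ^ ((#B : ℤ) - 2) else 0 := by
  have h : ∀ n : ℕ, (1 : ℝ) - (-1) ^ n = 1 ^ n - (-1) ^ n := by simp
  simp_rw [ite_even_and_odd_inter, h, ← sum_div,
    sum_powerset_mul_pow_card_inter_sdiff, ite_splits_zpow two_ne_zero]
  norm_num

end PowersetSums

theorem mu_diversity_transform_general
    {α : Type*} [Fintype α] [DecidableEq α]
    (w : Finset α → ℝ)
    (δ : Finset α → ℝ)
    (hδ : ∀ A : Finset α, δ A =
      ∑ B ∈ univ.filter (fun B : Finset α => (A ∩ B).Nonempty ∧ (A \ B).Nonempty), w B)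
    (μ : Finset α → ℝ)
    (hμ : ∀ A : Finset α, μ A =
      if Even A.card then
        ∑ B ∈ univ.filter (fun B : Finset α => Odd (A ∩ B).card), w B
      else 0) :
    (∀ A : Finset α, μ A = ∑ B ∈ A.powerset, (-2 : ℝ) ^ ((B.card : ℤ) - 2) * δ B) ∧
    (∀ B : Finset α, δ B = (2 : ℝ) ^ (-((B.card : ℤ) - 2)) * ∑ A ∈ B.powerset, μ A) := by
  have hμ' (A : Finset α) :
      μ A = ∑ C, (if Even #A ∧ Odd #(A ∩ C) then 1 else 0) * w C := by
    rw [hμ A]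
    split_ifs with hA <;> simp [hA, sum_filter]
  have hδ' (B : Finset α) :
      δ B = ∑ C, (if (B ∩ C).Nonempty ∧ (B \ C).Nonempty then 1 else 0) * w C := by
    simp only [hδ B, sum_filter, ite_mul, one_mul, zero_mul]
  refine ⟨fun A ↦ ?_, fun B ↦ ?_⟩
  · simp_rw [hμ' A, hδ', mul_sum, ← mul_assoc, mul_ite, mul_one, mul_zero]
    rw [sum_comm]
    simp_rw [← sum_mul, sum_powerset_splits_neg_two_zpow]
  · simp_rw [hμ', hδ' B]
    rw [sum_comm, mul_sum]
    simp_rw [← sum_mul, sum_powerset_even_and_odd_inter, ← mul_assoc, mul_ite,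
      ← zpow_add₀ (two_ne_zero (α := ℝ)), neg_add_cancel, zpow_zero, mul_zero]

/-- Given a symmetrized split weight function `w` (`w B ≥ 0`,
`w B = w Bᶜ`) with phylogenetic diversities
`δ A = ∑_{B : A ∩ B ≠ ∅, A ∖ B ≠ ∅} w B`, define
`μ A = ∑_{B : |A ∩ B| odd} w B` when `|A|` is even, and `μ A = 0` when `|A|` is odd.
Then `μ A = ∑_{B ⊆ A} (−2)^{|B|−2} δ B` for all `A`, and
`δ B = 2^{−(|B|−2)} ∑_{A ⊆ B} μ A` for all `B`. -/
theorem mu_diversity_transform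
    {α : Type*} [Fintype α] [DecidableEq α]
    (w : Finset α → ℝ) (hw : ∀ B : Finset α, 0 ≤ w B)
    (hwsym : ∀ B : Finset α, w B = w Bᶜ)
    (δ : Finset α → ℝ)
    (hδ : ∀ A : Finset α, δ A =
      ∑ B ∈ univ.filter (fun B : Finset α => (A ∩ B).Nonempty ∧ (A \ B).Nonempty), w B)
    (μ : Finset α → ℝ)
    (hμ : ∀ A : Finset α, μ A =
      if Even A.card then
        ∑ B ∈ univ.filter (fun B : Finset α => Odd (A ∩ B).card), w B
      else 0) :
    (∀ A : Finset α, μ A = ∑ B ∈ A.powerset, (-2 : ℝ) ^ ((B.card : ℤ) - 2) * δ B) ∧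
    (∀ B : Finset α, δ B = (2 : ℝ) ^ (-((B.card : ℤ) - 2)) * ∑ A ∈ B.powerset, μ A) :=
  mu_diversity_transform_general w δ hδ μ hμ
end

section
/- If A ⊆ X has even cardinality, then γ_A = (1/4) ∑_{B ⊆ A, |B| even} 2^{|B|} · 𝔼_{|A|−|B|} · s_B, where the sum is over all subsets B of A of even cardinality. -/
/-!
Write `o(D)` for the mass of the site patterns that meet `D` in an odd number of taxa (`oddMass`).
Since `|A|` is even, a pattern and its complement meet `A` with the same parity, so `γ_A = o(A)`.
For a fixed pattern `C`, an even `D ⊆ B` meets `C` oddly iff both `D ∩ C` and `D ∖ C` are odd, so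
there are `2^{|B|-2}` such `D` if `C` splits `B` and none otherwise; summing over `C` gives
`2^{|B|} s_B = 4 ∑_{D ⊆ B even} o(D)`. Finally, the recurrence defining the Euler numbers,
`∑_{k ≤ n, n - k even} C(n,k) 𝔼_k = [n = 0]`, says that the kernel `𝔼_{|A|-|B|}` inverts summation
over even subsets, and this recovers `o(A)`.
-/

open Finset

/-- The Euler numbers `𝔼ₖ`, defined by the EGF `1/cosh x = ∑ₖ 𝔼ₖ xᵏ/k!`
(so `𝔼₀ = 1`, `𝔼₂ = −1`, `𝔼₄ = 5`, and `𝔼ₖ = 0` for odd `k`); this recurrence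
is obtained by equating coefficients in `cosh x · (1/cosh x) = 1`. -/
noncomputable def eulerNumber : ℕ → ℚ
  | n =>
    (if n = 0 then 1 else 0) -
      ∑ k : Fin n, if (n - (k : ℕ)) % 2 = 0 then ((n.choose k : ℚ) * eulerNumber k) else 0
  decreasing_by exact k.2

section

variable {α : Type*} [DecidableEq α]

theorem eulerNumber_sum_choose (n : ℕ) :
    ∑ k ∈ range (n + 1), n.choose k • (if Even (n - k) then eulerNumber k else 0) =
      if n = 0 then 1 else 0 := by
  have h := eulerNumber.eq_1 n
  rw [Fin.sum_univ_eq_sum_range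
    (fun k => if (n - k) % 2 = 0 then (n.choose k : ℚ) * eulerNumber k else 0)] at h
  simp only [← Nat.even_iff, ← nsmul_eq_mul] at h
  simp only [sum_range_succ, smul_ite, smul_zero, Nat.sub_self, Even.zero, if_true,
    Nat.choose_self, one_smul]
  linarith

theorem sum_powerset_eulerNumber (S : Finset α) :
    ∑ T ∈ S.powerset, (if Even (#S - #T) then eulerNumber #T else 0) =
      if S = ∅ then 1 else 0 := by
  rw [sum_powerset_apply_card (fun m => if Even (#S - m) then eulerNumber m else 0),
    eulerNumber_sum_choose]
  simp only [card_eq_zero]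

theorem sum_eulerNumber_card_sub_of_subset {A D : Finset α} (hDA : D ⊆ A) (hD : Even #D) :
    ∑ B ∈ A.powerset with Even #B ∧ D ⊆ B, eulerNumber (#A - #B) = if D = A then 1 else 0 := by
  have hAD : D = A ↔ A \ D = ∅ := by
    rw [sdiff_eq_empty_iff_subset]; exact ⟨fun h => h.ge, hDA.antisymm⟩
  have hDA' := card_le_card hDA
  rw [Nat.even_iff] at hD
  simp only [hAD, ← sum_powerset_eulerNumber (A \ D), ← sum_filter]
  refine sum_nbij' (A \ ·) (A \ ·) ?_ ?_ ?_ ?_ ?_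
  · intro B hB
    simp only [mem_filter, mem_powerset] at hB ⊢
    obtain ⟨hBA, hB, hDB⟩ := hB
    have := card_le_card hDB
    have := card_le_card hBA
    refine ⟨sdiff_subset_sdiff subset_rfl hDB, ?_⟩
    rw [card_sdiff_of_subset hBA, card_sdiff_of_subset hDA, Nat.even_iff]
    rw [Nat.even_iff] at hB
    omega
  · intro T hT
    simp only [mem_filter, mem_powerset] at hT ⊢
    obtain ⟨hTAD, hT⟩ := hT
    have hTA : T ⊆ A := hTAD.trans sdiff_subset
    have := card_le_card hTAD
    refine ⟨sdiff_subset, ?_, subset_sdiff.mpr ⟨hDA, disjoint_of_subset_right hTAD disjoint_sdiff⟩⟩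
    rw [card_sdiff_of_subset hDA] at hT this
    rw [card_sdiff_of_subset hTA, Nat.even_iff]
    rw [Nat.even_iff] at hT
    omega
  · intro B hB
    exact Finset.sdiff_sdiff_eq_self (mem_powerset.mp (mem_filter.mp hB).1)
  · intro T hT
    exact Finset.sdiff_sdiff_eq_self ((mem_powerset.mp (mem_filter.mp hT).1).trans sdiff_subset)
  · intro B hB
    rw [card_sdiff_of_subset (mem_powerset.mp (mem_filter.mp hB).1)]

theorem sum_eulerNumber_mul_sum_powerset {K : Type*} [Field K] [CharZero K]
    (f : Finset α → K) {A : Finset α} (hA : Even #A) :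
    ∑ B ∈ A.powerset with Even #B,
      (eulerNumber (#A - #B) : K) * ∑ D ∈ B.powerset with Even #D, f D = f A := by
  simp_rw [mul_sum]
  rw [sum_comm' (t' := {D ∈ A.powerset | Even #D})
    (s' := fun D => {B ∈ A.powerset | Even #B ∧ D ⊆ B}) (by
      intro B D
      simp only [mem_filter, mem_powerset]
      constructor
      · rintro ⟨⟨hBA, hB⟩, hDB, hD⟩
        exact ⟨⟨hBA, hB, hDB⟩, hDB.trans hBA, hD⟩
      · rintro ⟨⟨hBA, hB, hDB⟩, -, hD⟩
        exact ⟨⟨hBA, hB⟩, hDB, hD⟩)]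
  have hinner : ∀ D ∈ {D ∈ A.powerset | Even #D},
      ∑ B ∈ A.powerset with Even #B ∧ D ⊆ B, (eulerNumber (#A - #B) : K) * f D =
        if D = A then f A else 0 := by
    intro D hD
    rw [mem_filter, mem_powerset] at hD
    rw [← sum_mul, ← Rat.cast_sum, sum_eulerNumber_card_sub_of_subset hD.1 hD.2]
    split_ifs with h <;> simp [h]
  rw [sum_congr rfl hinner, sum_ite_eq', if_pos (mem_filter.mpr ⟨mem_powerset_self A, hA⟩)]

theorem two_mul_card_powerset_filter_odd (S : Finset α) :
    2 * #{T ∈ S.powerset | Odd #T} = if S.Nonempty then 2 ^ #S else 0 := by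
  have hsign : ∀ T : Finset α, (-1 : ℤ) ^ #T = 1 - 2 * if Odd #T then 1 else 0 := by
    intro T
    rcases Nat.even_or_odd #T with h | h
    · simp [h.neg_one_pow, Nat.not_odd_iff_even.mpr h]
    · simp [h.neg_one_pow, h]
  have h := sum_powerset_neg_one_pow_card (x := S)
  simp only [hsign, sum_sub_distrib, ← mul_sum, sum_boole, sum_const, card_powerset,
    nsmul_eq_mul, mul_one] at h
  zify
  rcases S.eq_empty_or_nonempty with rfl | hS
  · simp
  · rw [if_neg hS.ne_empty] at h
    rw [if_pos hS]
    push_cast at h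
    linarith

theorem card_filter_odd_inter_odd_sdiff (B C : Finset α) :
    #{D ∈ B.powerset | Odd #(D ∩ C) ∧ Odd #(D \ C)} =
      #{E ∈ (B ∩ C).powerset | Odd #E} * #{F ∈ (B \ C).powerset | Odd #F} := by
  have hsplit : ∀ {E F : Finset α}, E ⊆ B ∩ C → F ⊆ B \ C → (E ∪ F) ∩ C = E ∧ (E ∪ F) \ C = F := by
    intro E F hE hF
    have hEC : E ⊆ C := hE.trans inter_subset_right
    have hFC : Disjoint F C := disjoint_of_subset_left hF sdiff_disjoint
    rw [union_inter_distrib_right, inter_eq_left.mpr hEC, disjoint_iff_inter_eq_empty.mp hFC,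
      union_empty, union_sdiff_distrib, sdiff_eq_empty_iff_subset.mpr hEC, empty_union,
      sdiff_eq_self_of_disjoint hFC]
    exact ⟨rfl, rfl⟩
  rw [← card_product, ← filter_product]
  refine card_nbij' (fun D => (D ∩ C, D \ C)) (fun EF => EF.1 ∪ EF.2) ?_ ?_ ?_ ?_
  · intro D hD
    simp only [coe_filter, mem_powerset, Set.mem_ofPred_eq, mem_product] at hD ⊢
    exact ⟨⟨inter_subset_inter_right hD.1, sdiff_subset_sdiff hD.1 subset_rfl⟩, hD.2⟩
  · rintro ⟨E, F⟩ hEF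
    simp only [coe_filter, mem_powerset, Set.mem_ofPred_eq, mem_product] at hEF
    obtain ⟨⟨hE, hF⟩, hEodd, hFodd⟩ := hEF
    simp only [coe_filter, mem_powerset, Set.mem_ofPred_eq, (hsplit hE hF).1, (hsplit hE hF).2]
    exact ⟨union_subset (hE.trans inter_subset_left) (hF.trans sdiff_subset), hEodd, hFodd⟩
  · intro D _
    exact sup_inf_sdiff D C
  · rintro ⟨E, F⟩ hEF
    simp only [coe_filter, mem_powerset, Set.mem_ofPred_eq, mem_product] at hEF
    obtain ⟨⟨hE, hF⟩, -⟩ := hEF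
    simp only [(hsplit hE hF).1, (hsplit hE hF).2]

theorem four_mul_card_filter_even_odd_inter (B C : Finset α) :
    4 * #{D ∈ B.powerset | Even #D ∧ Odd #(D ∩ C)} =
      if (B ∩ C).Nonempty ∧ (B \ C).Nonempty then 2 ^ #B else 0 := by
  have hparity : ∀ D : Finset α, Even #D ∧ Odd #(D ∩ C) ↔ Odd #(D ∩ C) ∧ Odd #(D \ C) := by
    intro D
    have := card_sdiff_add_card_inter D C
    simp only [Nat.even_iff, Nat.odd_iff]
    omega
  rw [filter_congr fun D _ => hparity D, card_filter_odd_inter_odd_sdiff,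
    show 4 = 2 * 2 from rfl, mul_mul_mul_comm, two_mul_card_powerset_filter_odd,
    two_mul_card_powerset_filter_odd, ← card_inter_add_card_sdiff B C, pow_add]
  split_ifs <;> simp_all

section SitePatterns

variable [Fintype α]

noncomputable def oddMass (p : Finset α → ℝ) (D : Finset α) : ℝ :=
  ∑ C with Odd #(D ∩ C), p C

theorem odd_card_inter_compl_iff {A : Finset α} (hA : Even #A) (B : Finset α) :
    Odd #(A ∩ Bᶜ) ↔ Odd #(A ∩ B) := by
  have := card_sdiff_add_card_inter A B
  rw [← sdiff_eq_inter_compl]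
  rw [Nat.even_iff] at hA
  simp only [Nat.odd_iff]
  omega

theorem sum_filter_odd_card_inter_symm {A : Finset α} (hA : Even #A) (p : Finset α → ℝ) :
    ∑ B with Odd #(A ∩ B), (p B + p Bᶜ) / 2 = oddMass p A := by
  have hcompl : ∑ B with Odd #(A ∩ B), p Bᶜ = oddMass p A :=
    sum_nbij' compl compl (by simp [odd_card_inter_compl_iff hA])
      (by simp [odd_card_inter_compl_iff hA]) (fun B _ => compl_compl B)
      (fun B _ => compl_compl B) (fun _ _ => rfl)
  rw [← sum_div, sum_add_distrib, hcompl, oddMass]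
  ring

theorem sum_powerset_filter_even_oddMass (p : Finset α → ℝ) (B : Finset α) :
    ∑ D ∈ B.powerset with Even #D, oddMass p D =
      ∑ C, #{D ∈ B.powerset | Even #D ∧ Odd #(D ∩ C)} * p C := by
  simp only [oddMass, sum_filter (p := fun C => Odd #(_ ∩ C))]
  rw [sum_comm]
  refine sum_congr rfl fun C _ => ?_
  rw [← sum_filter, filter_filter, sum_const, nsmul_eq_mul]

theorem two_pow_card_mul_sum_segregating (p : Finset α → ℝ) (B : Finset α) :
    2 ^ #B * ∑ C with (B ∩ C).Nonempty ∧ (B \ C).Nonempty, p C =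
      4 * ∑ D ∈ B.powerset with Even #D, oddMass p D := by
  rw [sum_powerset_filter_even_oddMass, sum_filter, mul_sum, mul_sum]
  refine sum_congr rfl fun C _ => ?_
  rw [← mul_assoc, ← Nat.cast_ofNat (n := 4), ← Nat.cast_mul, four_mul_card_filter_even_odd_inter]
  split_ifs <;> simp

end SitePatterns

end

theorem gamma_from_even_segregating_general
    {α : Type*} [Fintype α] [DecidableEq α]
    (p : Finset α → ℝ)
    (s : Finset α → ℝ)
    (hs : ∀ A : Finset α, s A =
      ∑ B ∈ univ.filter (fun B : Finset α => (A ∩ B).Nonempty ∧ (A \ B).Nonempty), p B)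
    (A : Finset α) (hA : Even A.card) :
    (∑ B ∈ univ.filter (fun B : Finset α => Odd (A ∩ B).card), (p B + p Bᶜ) / 2) =
      1 / 4 * ∑ B ∈ A.powerset.filter (fun B : Finset α => Even B.card),
        2 ^ B.card * (eulerNumber (A.card - B.card) : ℝ) * s B := by
  rw [sum_filter_odd_card_inter_symm hA, ← sum_eulerNumber_mul_sum_powerset (oddMass p) hA,
    mul_sum]
  refine sum_congr rfl fun B _ => ?_
  rw [hs, mul_right_comm, two_pow_card_mul_sum_segregating]
  ring

/-- For a site-pattern distribution `p` with symmetrization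
`p̃ B = (p B + p Bᶜ)/2`, segregating-site probabilities
`s A = ∑_{B : A ∩ B ≠ ∅, A ∖ B ≠ ∅} p B`, and `γ A = ∑_{B : |A ∩ B| odd} p̃ B`:
if `|A|` is even then
`γ A = (1/4) ∑_{B ⊆ A, |B| even} 2^{|B|} 𝔼_{|A|−|B|} s B`. -/
theorem gamma_from_even_segregating
    {α : Type*} [Fintype α] [DecidableEq α]
    (p : Finset α → ℝ) (hp : ∀ A : Finset α, 0 ≤ p A)
    (hsum : ∑ A : Finset α, p A = 1)
    (s : Finset α → ℝ)
    (hs : ∀ A : Finset α, s A =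
      ∑ B ∈ univ.filter (fun B : Finset α => (A ∩ B).Nonempty ∧ (A \ B).Nonempty), p B)
    (A : Finset α) (hA : Even A.card) :
    (∑ B ∈ univ.filter (fun B : Finset α => Odd (A ∩ B).card), (p B + p Bᶜ) / 2) =
      1 / 4 * ∑ B ∈ A.powerset.filter (fun B : Finset α => Even B.card),
        2 ^ B.card * (eulerNumber (A.card - B.card) : ℝ) * s B :=
  gamma_from_even_segregating_general p s hs A hA
end

section
/- If A ⊆ X has even cardinality, then μ_A = (1/4) ∑_{B ⊆ A, |B| even} 2^{|B|} · 𝔼_{|A|−|B|} · δ_B, where the sum is over all subsets B of A of even cardinality. -/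
/-!
Expanding `δ_C` and exchanging the sums, it suffices to show that for every `B` the coefficient
`∑_{C ⊆ A, C ∩ B ≠ ∅, C ∖ B ≠ ∅} 2^{|C|} 𝔼_{|A|-|C|}` is `4` if `|A ∩ B|` is odd and `0`
otherwise; odd `C` may be added to the sum because `𝔼` vanishes in odd degree.
Let `ε` be the linear functional on `ℚ[X]` with `ε(Xⁿ) = 𝔼ₙ`. By inclusion–exclusion over
`C ⊆ A ∖ B` and `C ⊆ A ∩ B`, the coefficient is `ε(Q)` for
`Q = ((X+2)^k - X^k)((X+2)^m - X^m)`, `k = |A ∩ B|`, `m = |A ∖ B|`.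
The recurrence defining `𝔼` says `ε((X+1)ⁿ) = [n = 0]` for even `n` (umbrally,
`eˣ sech x = 1 + tanh x`), hence `ε(P(X+1)) + ε(P(-X-1)) = 2 P(0)` for every `P`.
As `k + m` is even, `Q` is invariant under `X ↦ -X-2`, so `ε(Q) = Q(-1) = (1-(-1)^k)(1-(-1)^m)`.
-/

open Finset

open Polynomial

theorem eulerNumber_eq (n : ℕ) :
    eulerNumber n = (if n = 0 then 1 else 0) -
      ∑ k ∈ range n, if (n - k) % 2 = 0 then (n.choose k : ℚ) * eulerNumber k else 0 := by
  rw [eulerNumber, Fin.sum_univ_eq_sum_range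
    (fun k => if (n - k) % 2 = 0 then (n.choose k : ℚ) * eulerNumber k else 0)]

theorem eulerNumber_of_odd {n : ℕ} (hn : Odd n) : eulerNumber n = 0 := by
  induction n using Nat.strong_induction_on with
  | _ n ih =>
    rw [eulerNumber_eq, if_neg (by rintro rfl; simp at hn), zero_sub, neg_eq_zero]
    refine sum_eq_zero fun k hk => ?_
    have hk := mem_range.1 hk
    split_ifs with h
    · rw [ih k hk (by rw [Nat.odd_iff] at hn ⊢; omega), mul_zero]
    · rfl

theorem sum_range_choose_mul_eulerNumber_of_even {n : ℕ} (hn : Even n) :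
    ∑ j ∈ range (n + 1), (n.choose j : ℚ) * eulerNumber j = if n = 0 then 1 else 0 := by
  have hsum : ∑ k ∈ range n, (if (n - k) % 2 = 0 then (n.choose k : ℚ) * eulerNumber k else 0) =
      ∑ k ∈ range n, (n.choose k : ℚ) * eulerNumber k := by
    refine sum_congr rfl fun k hk => ?_
    have hk := mem_range.1 hk
    split_ifs with h
    · rfl
    · rw [eulerNumber_of_odd (by rw [Nat.even_iff] at hn; rw [Nat.odd_iff]; omega), mul_zero]
  rw [sum_range_succ, Nat.choose_self, Nat.cast_one, one_mul, ← hsum]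
  linear_combination eulerNumber_eq n

noncomputable def eulerFunctional : ℚ[X] →ₗ[ℚ] ℚ :=
  lsum fun n => LinearMap.mulRight ℚ (eulerNumber n)

theorem eulerFunctional_C_mul_X_pow (c : ℚ) (n : ℕ) :
    eulerFunctional (C c * X ^ n) = c * eulerNumber n := by
  simp [eulerFunctional, C_mul_X_pow_eq_monomial, sum_monomial_index]

theorem eulerFunctional_X_add_one_pow (n : ℕ) :
    eulerFunctional ((X + 1) ^ n) = ∑ j ∈ range (n + 1), (n.choose j : ℚ) * eulerNumber j := by
  simp only [add_pow, one_pow, mul_one, map_sum]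
  refine sum_congr rfl fun j _ => ?_
  rw [← C_eq_natCast, mul_comm, eulerFunctional_C_mul_X_pow]

theorem eulerFunctional_comp_X_add_one_add_comp_neg (P : ℚ[X]) :
    eulerFunctional (P.comp (X + 1)) + eulerFunctional (P.comp (-X - 1)) = 2 * P.eval 0 := by
  induction P using Polynomial.induction_on' with
  | add p q hp hq => simp only [add_comp, map_add, eval_add]; linarith
  | monomial n c =>
    have hneg : (-X - 1 : ℚ[X]) ^ n = C ((-1) ^ n) * (X + 1) ^ n := by
      rw [show (-X - 1 : ℚ[X]) = C (-1) * (X + 1) by simp; ring, mul_pow, map_pow]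
    simp only [monomial_comp, hneg, ← mul_assoc, ← smul_eq_C_mul, map_smul,
      eulerFunctional_X_add_one_pow, eval_monomial, smul_eq_mul]
    rcases Nat.even_or_odd n with hn | hn
    · rw [sum_range_choose_mul_eulerNumber_of_even hn, hn.neg_one_pow]
      split_ifs with h0
      · rw [h0, pow_zero]; ring
      · rw [zero_pow h0]; ring
    · rw [hn.neg_one_pow, zero_pow hn.pos.ne']
      ring

theorem eulerFunctional_eq_eval_of_comp_neg_sub_two {Q : ℚ[X]} (hQ : Q.comp (-X - 2) = Q) :
    eulerFunctional Q = Q.eval (-1) := by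
  have h := eulerFunctional_comp_X_add_one_add_comp_neg (Q.comp (X - 1))
  rwa [comp_assoc, comp_assoc, sub_comp, X_comp, one_comp, sub_comp, X_comp, one_comp,
    add_sub_cancel_right, comp_X, show (-X - 1 - 1 : ℚ[X]) = -X - 2 by ring, hQ, eval_comp,
    eval_sub, eval_X, eval_one, zero_sub, ← two_mul, mul_right_inj' two_ne_zero] at h

theorem eulerFunctional_mul_sub_pow {k m : ℕ} (h : Even (k + m)) :
    eulerFunctional (((X + 2) ^ k - X ^ k) * ((X + 2) ^ m - X ^ m)) = if Odd k then 4 else 0 := by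
  rw [eulerFunctional_eq_eval_of_comp_neg_sub_two]
  · simp only [eval_mul, eval_sub, eval_pow, eval_add, eval_X, eval_ofNat]
    rw [show (-1 + 2 : ℚ) = 1 by norm_num, one_pow, one_pow]
    rcases Nat.even_or_odd k with hk | hk
    · rw [if_neg (Nat.not_odd_iff_even.2 hk), hk.neg_one_pow, sub_self, zero_mul]
    · rw [if_pos hk, hk.neg_one_pow, ((Nat.even_add'.1 h).1 hk).neg_one_pow]
      norm_num
  · have hX2 : (X + 2 : ℚ[X]).comp (-X - 2) = -X := by simp
    have hX : (X : ℚ[X]).comp (-X - 2) = -(X + 2) := by simp; ring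
    have hsign : (-1 : ℚ[X]) ^ k * (-1) ^ m = 1 := by rw [← pow_add, h.neg_one_pow]
    simp only [mul_comp, sub_comp, pow_comp, hX2, hX, neg_pow (X : ℚ[X]), neg_pow (X + 2 : ℚ[X])]
    linear_combination ((X + 2) ^ k - X ^ k) * ((X + 2) ^ m - X ^ m) * hsign

theorem sum_powerset_C_two_pow_mul_X_pow {α : Type*} {S A : Finset α} (h : S ⊆ A) :
    ∑ t ∈ S.powerset, C (2 ^ t.card : ℚ) * X ^ (A.card - t.card) =
      X ^ (A.card - S.card) * (X + 2) ^ S.card := by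
  rw [sum_powerset_apply_card (fun j => C (2 ^ j : ℚ) * X ^ (A.card - j)),
    add_comm (X : ℚ[X]), add_pow, mul_sum]
  refine sum_congr rfl fun j hj => ?_
  have hj : j ≤ S.card := Nat.lt_succ_iff.1 (mem_range.1 hj)
  rw [show A.card - j = (A.card - S.card) + (S.card - j) by have := card_le_card h; omega,
    pow_add, nsmul_eq_mul, map_pow, C_ofNat]
  ring

theorem sum_powerset_filter_split {α : Type*} [DecidableEq α] (A B : Finset α) :
    ∑ t ∈ A.powerset with (t ∩ B).Nonempty ∧ (t \ B).Nonempty,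
        C (2 ^ t.card : ℚ) * X ^ (A.card - t.card) =
      ((X + 2) ^ (A ∩ B).card - X ^ (A ∩ B).card) *
        ((X + 2) ^ (A \ B).card - X ^ (A \ B).card) := by
  have hunsplit : {t ∈ A.powerset | ¬((t ∩ B).Nonempty ∧ (t \ B).Nonempty)} =
      (A \ B).powerset ∪ (A ∩ B).powerset := by
    ext t
    simp only [mem_filter, mem_union, mem_powerset, subset_sdiff, subset_inter_iff, not_and_or,
      not_nonempty_iff_eq_empty, disjoint_iff_inter_eq_empty, sdiff_eq_empty_iff_subset]
    tauto
  have hinter : (A \ B).powerset ∩ (A ∩ B).powerset = {∅} := by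
    ext t
    rw [mem_inter, mem_powerset, mem_powerset, ← subset_inter_iff,
      disjoint_iff_inter_eq_empty.1 (disjoint_sdiff_inter A B), subset_empty, mem_singleton]
  have hsum := sum_filter_add_sum_filter_not A.powerset
    (fun t => (t ∩ B).Nonempty ∧ (t \ B).Nonempty)
    (fun t => C (2 ^ t.card : ℚ) * X ^ (A.card - t.card))
  have hunion := sum_union_inter (s₁ := (A \ B).powerset) (s₂ := (A ∩ B).powerset)
    (f := fun t => C (2 ^ t.card : ℚ) * X ^ (A.card - t.card))
  rw [← hunsplit, hinter, sum_singleton] at hunion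
  rw [sum_powerset_C_two_pow_mul_X_pow subset_rfl] at hsum
  rw [sum_powerset_C_two_pow_mul_X_pow sdiff_subset,
    sum_powerset_C_two_pow_mul_X_pow inter_subset_left] at hunion
  have hcard := card_inter_add_card_sdiff A B
  have hXpow : (X : ℚ[X]) ^ A.card = X ^ (A ∩ B).card * X ^ (A \ B).card := by rw [← pow_add, hcard]
  have hX2pow : (X + 2 : ℚ[X]) ^ A.card = (X + 2) ^ (A ∩ B).card * (X + 2) ^ (A \ B).card := by
    rw [← pow_add, hcard]
  rw [show A.card - (A \ B).card = (A ∩ B).card by omega,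
    show A.card - (A ∩ B).card = (A \ B).card by omega] at hunion
  simp only [card_empty, pow_zero, map_one, one_mul, Nat.sub_zero, Nat.sub_self] at hsum hunion
  linear_combination hsum - hunion + hX2pow + hXpow

theorem sum_powerset_filter_split_two_pow_mul_eulerNumber {α : Type*} [DecidableEq α]
    {A : Finset α} (hA : Even A.card) (B : Finset α) :
    ∑ t ∈ A.powerset with (t ∩ B).Nonempty ∧ (t \ B).Nonempty,
        (2 : ℚ) ^ t.card * eulerNumber (A.card - t.card) = if Odd (A ∩ B).card then 4 else 0 := by
  rw [← eulerFunctional_mul_sub_pow (by rwa [card_inter_add_card_sdiff]),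
    ← sum_powerset_filter_split, map_sum]
  simp only [eulerFunctional_C_mul_X_pow]

theorem mu_from_even_diversity_general
    {α : Type*} [Fintype α] [DecidableEq α]
    (w : Finset α → ℝ)
    (δ : Finset α → ℝ)
    (hδ : ∀ A : Finset α, δ A =
      ∑ B ∈ univ.filter (fun B : Finset α => (A ∩ B).Nonempty ∧ (A \ B).Nonempty), w B)
    (A : Finset α) (hA : Even A.card) :
    (∑ B ∈ univ.filter (fun B : Finset α => Odd (A ∩ B).card), w B) =
      1 / 4 * ∑ B ∈ A.powerset.filter (fun B : Finset α => Even B.card),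
        2 ^ B.card * (eulerNumber (A.card - B.card) : ℝ) * δ B := by
  have hcoeff (B : Finset α) : ∑ C ∈ A.powerset with (C ∩ B).Nonempty ∧ (C \ B).Nonempty,
      (2 : ℝ) ^ C.card * (eulerNumber (A.card - C.card) : ℝ) =
        if Odd (A ∩ B).card then 4 else 0 := by
    have h := sum_powerset_filter_split_two_pow_mul_eulerNumber hA B
    split_ifs at h ⊢ <;> exact_mod_cast h
  have hodd : ∀ C ∈ A.powerset, 2 ^ C.card * (eulerNumber (A.card - C.card) : ℝ) * δ C ≠ 0 →
      Even C.card := fun C hC hne => by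
    by_contra hC_odd
    rw [eulerNumber_of_odd (Nat.Even.sub_odd (card_le_card (mem_powerset.1 hC)) hA
      (Nat.not_even_iff_odd.1 hC_odd))] at hne
    simp at hne
  calc ∑ B with Odd (A ∩ B).card, w B
      = 1 / 4 * ∑ B, (if Odd (A ∩ B).card then 4 else 0) * w B := by
        rw [sum_filter, mul_sum]
        refine sum_congr rfl fun B _ => ?_
        split_ifs <;> ring
    _ = 1 / 4 * ∑ B, ∑ C ∈ A.powerset with (C ∩ B).Nonempty ∧ (C \ B).Nonempty,
          2 ^ C.card * (eulerNumber (A.card - C.card) : ℝ) * w B := by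
        simp only [← hcoeff, sum_mul]
    _ = 1 / 4 * ∑ C ∈ A.powerset, ∑ B with (C ∩ B).Nonempty ∧ (C \ B).Nonempty,
          2 ^ C.card * (eulerNumber (A.card - C.card) : ℝ) * w B := by
        rw [sum_comm' (t' := A.powerset)
          (s' := fun C => {B | (C ∩ B).Nonempty ∧ (C \ B).Nonempty})
          (fun B C => by simp only [mem_filter, mem_univ, true_and]; tauto)]
    _ = _ := by
        rw [sum_filter_of_ne hodd]
        simp only [hδ, mul_sum]

/-- For a symmetrized split weight function `w` (`w B ≥ 0`,
`w B = w Bᶜ`), with phylogenetic diversities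
`δ A = ∑_{B : A ∩ B ≠ ∅, A ∖ B ≠ ∅} w B` and `μ A = ∑_{B : |A ∩ B| odd} w B`:
if `|A|` is even then
`μ A = (1/4) ∑_{B ⊆ A, |B| even} 2^{|B|} 𝔼_{|A|−|B|} δ B`. -/
theorem mu_from_even_diversity
    {α : Type*} [Fintype α] [DecidableEq α]
    (w : Finset α → ℝ) (hw : ∀ B : Finset α, 0 ≤ w B)
    (hwsym : ∀ B : Finset α, w B = w Bᶜ)
    (δ : Finset α → ℝ)
    (hδ : ∀ A : Finset α, δ A =
      ∑ B ∈ univ.filter (fun B : Finset α => (A ∩ B).Nonempty ∧ (A \ B).Nonempty), w B)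
    (A : Finset α) (hA : Even A.card) :
    (∑ B ∈ univ.filter (fun B : Finset α => Odd (A ∩ B).card), w B) =
      1 / 4 * ∑ B ∈ A.powerset.filter (fun B : Finset α => Even B.card),
        2 ^ B.card * (eulerNumber (A.card - B.card) : ℝ) * δ B :=
  mu_from_even_diversity_general w δ hδ A hA
end

section
/- Suppose that for every subset A ⊆ X of even cardinality one has 1 − 2γ_A > 0 and μ_A = −(1/2)·ln(1 − 2γ_A). Then for every nonempty subset A ⊆ X of even cardinality, δ_A = −∑_{B ⊆ A, |B| even, B ≠ ∅} 2^{−|A|+1} · ln(1 − ∑_{C ⊆ B, |C| even, C ≠ ∅} 2^{|C|−1} · 𝔼_{|B|−|C|} · s_C). Equivalently, in matrix form δ = −G·log(1 − G^{−1}·s), where δ and s are the vectors of diversities and segregating-site probabilities indexed by nonempty even-cardinality subsets, G_{AB} = 2^{−|A|+1} for B ⊆ A (and 0 otherwise), (G^{−1})_{AB} = 2^{|B|−1}𝔼_{|A|−|B|} for B ⊆ A (and 0 otherwise), and log is applied componentwise. -/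
/-!
Write `p̃` for the symmetrized pattern probabilities. Since `S_A` is closed under complements,
`s_A` is also the sum of `p̃` over `S_A`. For fixed `D`, the number of even subsets `B ⊆ A`
with `|B ∩ D|` odd is `2^{|A|-2}` if `D` splits `A`, and `0` otherwise. Hence summing any `f`
over `S_A` gives `2^{2-|A|} ∑_{B ⊆ A even} ∑_{|B ∩ D| odd} f D`, so `δ = 2Gμ` and `s = 2Gγ`.
The matrix with entries `2^{|C|-1} 𝔼_{|B|-|C|}` is a left inverse of `G`: by the recurrence
defining the Euler numbers, `∑_{D ⊆ C ⊆ B, |C| even} 𝔼_{|B|-|C|} = [D = B]` for even `D`.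
Therefore `G⁻¹ s = 2γ`, and putting the path-set identity `μ = -½ log(1 - 2γ)` into
`δ = 2Gμ` gives the formula.
-/

open Finset

theorem sum_even_choose_mul_eulerNumber (m : ℕ) :
    ∑ j ∈ range (m + 1), (if Even j then (m.choose j : ℚ) * eulerNumber (m - j) else 0) =
      if m = 0 then 1 else 0 := by
  have recurrence : ∑ k ∈ range (m + 1),
      (if (m - k) % 2 = 0 then (m.choose k : ℚ) * eulerNumber k else 0) =
        if m = 0 then 1 else 0 := by
    rw [sum_range_succ, ← Fin.sum_univ_eq_sum_range, eulerNumber]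
    simp
  rw [← recurrence, ← sum_range_reflect]
  refine sum_congr rfl fun j hj => ?_
  have hjm : j ≤ m := Nat.lt_succ_iff.mp (mem_range.mp hj)
  simp only [Nat.add_sub_cancel, Nat.sub_sub_self hjm, Nat.choose_symm hjm, Nat.even_iff]

section

variable {β : Type*} [DecidableEq β]

theorem sum_powerset_even_eulerNumber (S : Finset β) :
    ∑ E ∈ S.powerset with Even #E, eulerNumber (#S - #E) = if S = ∅ then 1 else 0 := by
  rw [sum_filter, sum_powerset_apply_card (fun k => if Even k then eulerNumber (#S - k) else 0)]
  simp only [nsmul_eq_mul, mul_ite, mul_zero, sum_even_choose_mul_eulerNumber, card_eq_zero]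

theorem sum_Icc_even_eulerNumber {D B : Finset β} (hDB : D ⊆ B) (hD : Even #D) :
    ∑ C ∈ Icc D B with Even #C, eulerNumber (#B - #C) = if D = B then 1 else 0 := by
  have hdisj : ∀ E ∈ (B \ D).powerset, Disjoint D E := fun E hE =>
    disjoint_sdiff.mono_right (mem_powerset.mp hE)
  have hinj : Set.InjOn (D ∪ ·) (B \ D).powerset := fun E hE F hF h => by
    simpa [union_sdiff_cancel_left (hdisj E hE), union_sdiff_cancel_left (hdisj F hF)]
      using congrArg (· \ D) h
  have hBD : D = B ↔ B \ D = ∅ := by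
    rw [sdiff_eq_empty_iff_subset]; exact ⟨fun h => h ▸ subset_rfl, hDB.antisymm⟩
  simp_rw [hBD, ← sum_powerset_even_eulerNumber, Icc_eq_image_powerset hDB, sum_filter,
    sum_image hinj]
  refine sum_congr rfl fun E hE => ?_
  simp only [card_union_of_disjoint (hdisj E hE), card_sdiff_of_subset hDB, Nat.even_add,
    Nat.sub_add_eq, iff_true_left hD]

theorem sum_powerset_neg_one_pow_card_inter {R : Type*} [CommRing R] (A E : Finset β) :
    ∑ B ∈ A.powerset, (-1 : R) ^ #(B ∩ E) = if Disjoint A E then 2 ^ #A else 0 := by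
  have hsign : ∀ B : Finset β, (-1 : R) ^ #(B ∩ E) = ∏ b ∈ B, if b ∈ E then -1 else 1 := by
    intro B; rw [prod_ite_mem, prod_const]
  simp_rw [hsign, ← prod_one_add]
  split_ifs with h
  · rw [← prod_const]
    exact prod_congr rfl fun a ha => by rw [if_neg (disjoint_left.mp h ha)]; norm_num
  · obtain ⟨a, haA, haE⟩ := not_disjoint_iff.mp h
    exact prod_eq_zero haA (by simp [haE])

theorem four_mul_card_even_odd_inter (A D : Finset β) :
    4 * #{B ∈ A.powerset | Even #B ∧ Odd #(B ∩ D)} =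
      if (A ∩ D).Nonempty ∧ (A \ D).Nonempty then 2 ^ #A else 0 := by
  -- the expanded product `(1 + (-1)^|B|) (1 - (-1)^|B ∩ D|)`, with `|B| = |B ∩ D| + |B ∩ (A \ D)|`
  have hparity : ∀ B ∈ A.powerset, 4 * (((if Even #B ∧ Odd #(B ∩ D) then 1 else 0 : ℕ)) : ℤ) =
      1 + (-1) ^ #(B ∩ A) - (-1) ^ #(B ∩ D) - (-1) ^ #(B ∩ (A \ D)) := by
    intro B hB
    have hsplit : #(B ∩ D) + #(B ∩ (A \ D)) = #B := by
      rw [← inter_sdiff_assoc, inter_eq_left.mpr (mem_powerset.mp hB), card_inter_add_card_sdiff]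
    rw [inter_eq_left.mpr (mem_powerset.mp hB), ← hsplit]
    by_cases hx : Even #(B ∩ D) <;> by_cases hy : Even #(B ∩ (A \ D)) <;>
      simp [hx, hy, Nat.even_add, ← Nat.not_even_iff_odd]
  zify
  rw [card_filter, Nat.cast_sum, mul_sum, sum_congr rfl hparity]
  simp only [sum_sub_distrib, sum_add_distrib, sum_const, card_powerset,
    sum_powerset_neg_one_pow_card_inter, nsmul_eq_mul]
  have hA : Disjoint A A ↔ ¬A.Nonempty := by
    rw [not_nonempty_iff_eq_empty, disjoint_self_iff_empty]
  have hAD : Disjoint A (A \ D) ↔ ¬(A \ D).Nonempty := by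
    rw [not_nonempty_iff_eq_empty]
    refine ⟨fun h => disjoint_self_iff_empty _ |>.mp (h.mono_left sdiff_subset), fun h => ?_⟩
    rw [h]; exact disjoint_empty_right A
  simp only [hA, hAD, ← not_disjoint_iff_nonempty_inter]
  by_cases h1 : Disjoint A D <;> by_cases h2 : (A \ D).Nonempty
  · simp [h1, h2, h2.mono sdiff_subset]
  · rw [not_nonempty_iff_eq_empty, sdiff_eq_empty_iff_subset] at h2
    obtain rfl : A = ∅ := disjoint_self_iff_empty _ |>.mp (h1.mono_right h2)
    simp
  · simp [h1, h2, h2.mono sdiff_subset]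
  · simp [h1, h2, (not_disjoint_iff_nonempty_inter.mp h1).mono inter_subset_left]

theorem sum_segregating_eq_sum_even_sum_odd_inter [Fintype β]
    (f : Finset β → ℝ) (A : Finset β) :
    ∑ D with (A ∩ D).Nonempty ∧ (A \ D).Nonempty, f D =
      ∑ B ∈ {B ∈ A.powerset | Even #B ∧ B.Nonempty},
        (2 : ℝ) ^ (2 - (#A : ℤ)) * ∑ D with Odd #(B ∩ D), f D := by
  have hcount : ∀ D : Finset β,
      ∑ B ∈ {B ∈ A.powerset | Even #B ∧ B.Nonempty},
        (if Odd #(B ∩ D) then (2 : ℝ) ^ (2 - (#A : ℤ)) * f D else 0) =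
      if (A ∩ D).Nonempty ∧ (A \ D).Nonempty then f D else 0 := by
    intro D
    have hfilter : {B ∈ {B ∈ A.powerset | Even #B ∧ B.Nonempty} | Odd #(B ∩ D)} =
        {B ∈ A.powerset | Even #B ∧ Odd #(B ∩ D)} := by
      rw [filter_filter]
      refine filter_congr fun B _ => ⟨fun h => ⟨h.1.1, h.2⟩, fun h => ⟨⟨h.1, ?_⟩, h.2⟩⟩
      exact (card_pos.mp h.2.pos).mono inter_subset_left
    have h4 : (4 : ℝ) * #{B ∈ A.powerset | Even #B ∧ Odd #(B ∩ D)} =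
        if (A ∩ D).Nonempty ∧ (A \ D).Nonempty then 2 ^ #A else 0 :=
      mod_cast congrArg (Nat.cast (R := ℝ)) (four_mul_card_even_odd_inter A D)
    have hpow : (2 : ℝ) ^ (2 - (#A : ℤ)) * 2 ^ #A = 4 := by
      rw [← zpow_natCast, ← zpow_add₀ two_ne_zero]; norm_num
    rw [← sum_filter, sum_const, hfilter, nsmul_eq_mul]
    split_ifs at h4 ⊢
    · linear_combination ((2 : ℝ) ^ (2 - (#A : ℤ)) * f D / 4) * h4 + (f D / 4) * hpow
    · rw [show (#{B ∈ A.powerset | Even #B ∧ Odd #(B ∩ D)} : ℝ) = 0 by linarith, zero_mul]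
  rw [sum_filter]
  simp_rw [← hcount]
  rw [sum_comm]
  exact sum_congr rfl fun B _ => by rw [mul_sum, sum_filter]

theorem sum_eulerNumber_mul_sum_even_subsets (g : Finset β → ℝ)
    {B : Finset β} (hB : B.Nonempty) (hBeven : Even #B) :
    ∑ C ∈ {C ∈ B.powerset | Even #C ∧ C.Nonempty},
      (2 : ℝ) ^ ((#C : ℤ) - 1) * (eulerNumber (#B - #C) : ℝ) *
        ∑ D ∈ {D ∈ C.powerset | Even #D ∧ D.Nonempty},
          (2 : ℝ) ^ (2 - (#C : ℤ)) * g D = 2 * g B := by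
  have hpow : ∀ n : ℕ, (2 : ℝ) ^ ((n : ℤ) - 1) * 2 ^ (2 - (n : ℤ)) = 2 := fun n => by
    rw [← zpow_add₀ two_ne_zero]; norm_num
  calc _ = ∑ C ∈ {C ∈ B.powerset | Even #C ∧ C.Nonempty},
        ∑ D ∈ {D ∈ C.powerset | Even #D ∧ D.Nonempty},
          (eulerNumber (#B - #C) : ℝ) * (2 * g D) := by
        refine sum_congr rfl fun C _ => ?_
        rw [mul_sum]
        refine sum_congr rfl fun D _ => ?_
        linear_combination (eulerNumber (#B - #C) : ℝ) * g D * hpow C.card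
    _ = ∑ D ∈ {D ∈ B.powerset | Even #D ∧ D.Nonempty},
        ∑ C ∈ Icc D B with Even #C, (eulerNumber (#B - #C) : ℝ) * (2 * g D) := by
        refine sum_comm' fun C D => ?_
        simp only [mem_filter, mem_powerset, mem_Icc]
        exact ⟨fun ⟨⟨hCB, hC, _⟩, hDC, hD⟩ => ⟨⟨⟨hDC, hCB⟩, hC⟩, hDC.trans hCB, hD⟩,
          fun ⟨⟨⟨hDC, hCB⟩, hC⟩, _, hD⟩ => ⟨⟨hCB, hC, hD.2.mono hDC⟩, hDC, hD⟩⟩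
    _ = ∑ D ∈ {D ∈ B.powerset | Even #D ∧ D.Nonempty},
        (if D = B then 1 else 0) * (2 * g D) := by
        refine sum_congr rfl fun D hD => ?_
        rw [mem_filter, mem_powerset] at hD
        rw [← sum_mul, ← Rat.cast_sum, sum_Icc_even_eulerNumber hD.1 hD.2.1]
        split_ifs <;> simp
    _ = 2 * g B := by
        simp [hB, hBeven]

theorem sum_segregating_add_compl_div_two [Fintype β] (g : Finset β → ℝ) (A : Finset β) :
    ∑ D with (A ∩ D).Nonempty ∧ (A \ D).Nonempty,
        (g D + g Dᶜ) / 2 =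
      ∑ D with (A ∩ D).Nonempty ∧ (A \ D).Nonempty, g D := by
  have hcompl :
      ∑ D with (A ∩ D).Nonempty ∧ (A \ D).Nonempty, g Dᶜ =
        ∑ D with (A ∩ D).Nonempty ∧ (A \ D).Nonempty, g D := by
    rw [sum_filter, sum_filter]
    refine Fintype.sum_bijective compl compl_involutive.bijective _ _ fun D => ?_
    simp only [← sdiff_eq_inter_compl, sdiff_compl, inf_eq_inter, and_comm]
  rw [← sum_div, sum_add_distrib, hcompl]
  ring

end

theorem diversity_from_segregating_transform_general
    {α : Type*} [Fintype α] [DecidableEq α]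
    (p : Finset α → ℝ)
    (w : Finset α → ℝ)
    (s : Finset α → ℝ)
    (hs : ∀ A : Finset α, s A =
      ∑ B ∈ univ.filter (fun B : Finset α => (A ∩ B).Nonempty ∧ (A \ B).Nonempty), p B)
    (δ : Finset α → ℝ)
    (hδ : ∀ A : Finset α, δ A =
      ∑ B ∈ univ.filter (fun B : Finset α => (A ∩ B).Nonempty ∧ (A \ B).Nonempty), w B)
    (γ : Finset α → ℝ)
    (hγ : ∀ A : Finset α, γ A =
      if Even A.card then
        ∑ B ∈ univ.filter (fun B : Finset α => Odd (A ∩ B).card), (p B + p Bᶜ) / 2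
      else 0)
    (μ : Finset α → ℝ)
    (hμ : ∀ A : Finset α, μ A =
      if Even A.card then
        ∑ B ∈ univ.filter (fun B : Finset α => Odd (A ∩ B).card), w B
      else 0)
    (hpathset : ∀ A : Finset α, Even A.card →
      1 - 2 * γ A > 0 ∧ μ A = -(1 / 2) * Real.log (1 - 2 * γ A))
    (A : Finset α) :
    δ A = -∑ B ∈ A.powerset.filter (fun B : Finset α => Even B.card ∧ B.Nonempty),
      (2 : ℝ) ^ (-(A.card : ℤ) + 1) *
        Real.log (1 -
          ∑ C ∈ B.powerset.filter (fun C : Finset α => Even C.card ∧ C.Nonempty),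
            (2 : ℝ) ^ ((C.card : ℤ) - 1) * (eulerNumber (B.card - C.card) : ℝ) * s C) := by
  have hs_γ : ∀ C : Finset α, s C =
      ∑ D ∈ {D ∈ C.powerset | Even #D ∧ D.Nonempty},
        (2 : ℝ) ^ (2 - (#C : ℤ)) * γ D := fun C => by
    rw [hs, ← sum_segregating_add_compl_div_two, sum_segregating_eq_sum_even_sum_odd_inter]
    exact sum_congr rfl fun D hD => by rw [hγ, if_pos (mem_filter.mp hD).2.1]
  have hδ_μ : δ A = ∑ B ∈ {B ∈ A.powerset | Even #B ∧ B.Nonempty},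
      (2 : ℝ) ^ (2 - (#A : ℤ)) * μ B := by
    rw [hδ, sum_segregating_eq_sum_even_sum_odd_inter]
    exact sum_congr rfl fun B hB => by rw [hμ, if_pos (mem_filter.mp hB).2.1]
  have hpow : (2 : ℝ) ^ (2 - (#A : ℤ)) = 2 * 2 ^ (-(#A : ℤ) + 1) := by
    rw [← zpow_one_add₀ two_ne_zero]; ring_nf
  rw [hδ_μ, ← sum_neg_distrib]
  refine sum_congr rfl fun B hB => ?_
  obtain ⟨-, hBeven, hBne⟩ := mem_filter.mp hB
  simp_rw [hs_γ]
  rw [sum_eulerNumber_mul_sum_even_subsets γ hBne hBeven, (hpathset B hBeven).2, hpow]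
  ring

/-- Let `p` be a site-pattern distribution with segregating-site
probabilities `s`, and `w` a symmetrized split weight function with phylogenetic
diversities `δ`; let `γ A = ∑_{B : |A∩B| odd} (p B + p Bᶜ)/2` and
`μ A = ∑_{B : |A∩B| odd} w B` for `|A|` even (`γ A = μ A = 0` for `|A|` odd).
Suppose that for every subset `A` of even cardinality, `1 − 2γ_A > 0` and
`μ_A = −(1/2)·ln(1 − 2γ_A)` (Hendy's path-set identity).  Then for every nonempty
even-cardinality subset `A`,
`δ_A = −∑_{B ⊆ A, |B| even, B ≠ ∅} 2^{−|A|+1} ·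
  ln(1 − ∑_{C ⊆ B, |C| even, C ≠ ∅} 2^{|C|−1} 𝔼_{|B|−|C|} s_C)`,
i.e. in matrix form `δ = −G·log(𝟙 − G⁻¹·s)`. -/
theorem diversity_from_segregating_transform
    {α : Type*} [Fintype α] [DecidableEq α]
    (p : Finset α → ℝ) (hp : ∀ A : Finset α, 0 ≤ p A)
    (hsum : ∑ A : Finset α, p A = 1)
    (w : Finset α → ℝ) (hw : ∀ B : Finset α, 0 ≤ w B)
    (hwsym : ∀ B : Finset α, w B = w Bᶜ)
    (s : Finset α → ℝ)
    (hs : ∀ A : Finset α, s A =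
      ∑ B ∈ univ.filter (fun B : Finset α => (A ∩ B).Nonempty ∧ (A \ B).Nonempty), p B)
    (δ : Finset α → ℝ)
    (hδ : ∀ A : Finset α, δ A =
      ∑ B ∈ univ.filter (fun B : Finset α => (A ∩ B).Nonempty ∧ (A \ B).Nonempty), w B)
    (γ : Finset α → ℝ)
    (hγ : ∀ A : Finset α, γ A =
      if Even A.card then
        ∑ B ∈ univ.filter (fun B : Finset α => Odd (A ∩ B).card), (p B + p Bᶜ) / 2
      else 0)
    (μ : Finset α → ℝ)
    (hμ : ∀ A : Finset α, μ A =
      if Even A.card then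
        ∑ B ∈ univ.filter (fun B : Finset α => Odd (A ∩ B).card), w B
      else 0)
    (hpathset : ∀ A : Finset α, Even A.card →
      1 - 2 * γ A > 0 ∧ μ A = -(1 / 2) * Real.log (1 - 2 * γ A))
    (A : Finset α) (hA : A.Nonempty) (hAeven : Even A.card) :
    δ A = -∑ B ∈ A.powerset.filter (fun B : Finset α => Even B.card ∧ B.Nonempty),
      (2 : ℝ) ^ (-(A.card : ℤ) + 1) *
        Real.log (1 -
          ∑ C ∈ B.powerset.filter (fun C : Finset α => Even C.card ∧ C.Nonempty),
            (2 : ℝ) ^ ((C.card : ℤ) - 1) * (eulerNumber (B.card - C.card) : ℝ) * s C) :=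
  diversity_from_segregating_transform_general p w s hs δ hδ γ hγ μ hμ hpathset A
end
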